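/- arXiv:1806.06531 — 8 statements merged into one kernel-verified Lean document; each statement's English description precedes it below -/
import Mathlib

section
/- For every f in the Catalan monoid C_{n+1}, if one sets Y = f([n+1]) \ {n+1} and X = {i ∈ f^{-1}(Y) : i = max f^{-1}(f(i))} (so X consists of the maximum element of each fiber of f except the fiber of n+1), then X ≤ Y in P_n and f = f_{X,Y}. -/
/-!
Each `x ∈ X` is the last point of its fibre, so the monotone map `f` is strictly larger at every
point after `x`. Hence `f` maps `X` increasingly and bijectively onto `Y`, and for every `i` the
points of `X` below `i` correspond to the points of `Y` below `f i`. Their number is therefore the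
position of `f i` in the increasing enumeration of `Y`, or `|Y|` when `f i = n+1`, which is how
`f_{X,Y}` reads off its value; and `x ≤ f x` gives `X ≤ Y`.
-/

/-- `X ≤ Y` in the poset `Pₙ`: writing `X = {x₁ < ⋯ < x_k}` and `Y = {y₁ < ⋯ < y_l}`,
we require `k = l` and `xᵢ ≤ yᵢ` for all `i` (encoded via `List.Forall₂` on the
sorted enumerations, which forces in particular `|X| = |Y|`). -/
def Ple {α : Type*} [LinearOrder α] (X Y : Finset α) : Prop :=
  List.Forall₂ (· ≤ ·) (X.sort (· ≤ ·)) (Y.sort (· ≤ ·))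

/-- The map `f_{X,Y} : [n+1] → [n+1]` (with `[n+1]` modelled as `Fin (n+1)` and
`[n] ⊆ [n+1]` as the finsets avoiding `Fin.last n`).  Writing `X = {x₁ < ⋯ < x_k}` and
`Y = {y₁ < ⋯ < y_k}`, we have `f_{X,Y}(i) = y₁` for `i ≤ x₁`, `f_{X,Y}(i) = y_j` for
`x_{j-1} < i ≤ x_j`, and `f_{X,Y}(i) = n+1` for `i > x_k`: indeed, the number `c` of
elements of `X` that are `< i` equals `j - 1` exactly when `x_{j-1} < i ≤ x_j`, and the
`(c+1)`-st smallest element of `Y` is produced when `c < |Y|`. -/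
def fXY {n : ℕ} (X Y : Finset (Fin (n+1))) (i : Fin (n+1)) : Fin (n+1) :=
  if h : (X.filter (fun x => x < i)).card < (Y.sort (· ≤ ·)).length then
    (Y.sort (· ≤ ·)).get ⟨(X.filter (fun x => x < i)).card, h⟩
  else Fin.last n

open Finset

namespace Finset

variable {α β : Type*} [LinearOrder α]

theorem card_filter_lt_orderEmbOfFin (s : Finset α) (k : Fin #s) :
    #{x ∈ s | x < s.orderEmbOfFin rfl k} = k := by
  have h : {x ∈ s | x < s.orderEmbOfFin rfl k}
      = (Iio k).map (s.orderEmbOfFin rfl).toEmbedding := by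
    ext x
    simp only [mem_filter, mem_map, mem_Iio, RelEmbedding.coe_toEmbedding]
    constructor
    · rintro ⟨hxs, hxk⟩
      obtain ⟨j, rfl⟩ : x ∈ Set.range (s.orderEmbOfFin rfl) := by rwa [range_orderEmbOfFin]
      exact ⟨j, (s.orderEmbOfFin rfl).lt_iff_lt.1 hxk, rfl⟩
    · rintro ⟨j, hjk, rfl⟩
      exact ⟨orderEmbOfFin_mem s rfl j, (s.orderEmbOfFin rfl).lt_iff_lt.2 hjk⟩
  rw [h, card_map, Fin.card_Iio]

theorem sort_getElem_card_filter_lt {s : Finset α} {a : α} (ha : a ∈ s)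
    (h : #{x ∈ s | x < a} < (s.sort (· ≤ ·)).length) :
    (s.sort (· ≤ ·))[#{x ∈ s | x < a}] = a := by
  set k := (s.orderIsoOfFin rfl).symm ⟨a, ha⟩
  have hk : s.orderEmbOfFin rfl k = a := by
    rw [← coe_orderIsoOfFin_apply, OrderIso.apply_symm_apply]
  simp_rw [← hk, card_filter_lt_orderEmbOfFin]
  rfl

theorem _root_.StrictMonoOn.map_sort_eq_sort_image [LinearOrder β] {f : α → β} {s : Finset α}
    (hf : StrictMonoOn f s) : (s.sort (· ≤ ·)).map f = (s.image f).sort (· ≤ ·) := by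
  rw [sort, Multiset.map_sort f s.val _ _ fun a ha b hb => (hf.le_iff_le ha hb).symm,
    ← image_val_of_injOn hf.injOn]
  rfl

end Finset

section FiberMaxima

variable {α β : Type*} [LinearOrder α] [LinearOrder β] {f : α → β}

theorem Monotone.apply_lt_apply_of_fiber_le (hf : Monotone f) {x z : α}
    (hx : ∀ j, f j = f x → j ≤ x) (hxz : x < z) : f x < f z :=
  (hf hxz.le).lt_of_ne fun h => hxz.not_ge (hx z h.symm)

theorem Monotone.card_filter_lt_eq_card_filter_image_lt (hf : Monotone f) {X : Finset α}
    (hX : ∀ x ∈ X, ∀ z, x < z → f x < f z) (i : α) :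
    #{x ∈ X | x < i} = #{y ∈ X.image f | y < f i} := by
  have hlt : ∀ x ∈ X, f x < f i ↔ x < i := fun x hx => ⟨hf.reflect_lt, hX x hx i⟩
  rw [filter_image, filter_congr hlt,
    card_image_of_injOn (StrictMonoOn.injOn fun a ha b _ hab => hX a (mem_filter.1 ha).1 b hab)]

theorem image_eq_of_mem_iff_fiber_le [Fintype α] {X : Finset α} {Y : Finset β}
    (hY : ∀ y ∈ Y, ∃ x, f x = y) (hX : ∀ x, x ∈ X ↔ f x ∈ Y ∧ ∀ j, f j = f x → j ≤ x) :
    X.image f = Y := by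
  ext y
  simp only [mem_image, hX]
  constructor
  · rintro ⟨x, ⟨hx, -⟩, rfl⟩
    exact hx
  · intro hy
    obtain ⟨a, rfl⟩ := hY y hy
    obtain ⟨x, hx, hmax⟩ := exists_max_image {j | f j = f a} id ⟨a, by simp⟩
    rw [mem_filter] at hx
    exact ⟨x, ⟨hx.2 ▸ hy, fun j hj => hmax j (by simpa [hx.2] using hj)⟩, hx.2⟩

end FiberMaxima

theorem fXY_apply_eq {n : ℕ} {X Y : Finset (Fin (n+1))} {i b : Fin (n+1)}
    (hY : Fin.last n ∉ Y) (hb : b ∈ Y ∨ b = Fin.last n)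
    (hcard : #{x ∈ X | x < i} = #{y ∈ Y | y < b}) : fXY X Y i = b := by
  unfold fXY
  rcases hb with hb | rfl
  · have hlt : #{y ∈ Y | y < b} < (Y.sort (· ≤ ·)).length := by
      rw [length_sort]
      exact card_lt_card (filter_ssubset.2 ⟨b, hb, lt_irrefl b⟩)
    rw [dif_pos (hcard ▸ hlt), List.get_eq_getElem]
    simp only [hcard]
    exact sort_getElem_card_filter_lt hb hlt
  · have hall : {y ∈ Y | y < Fin.last n} = Y :=
      filter_true_of_mem fun y hy => (Fin.le_last y).lt_of_ne (ne_of_mem_of_not_mem hy hY)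
    rw [dif_neg (by rw [hcard, hall, length_sort]; exact lt_irrefl _)]

/-- For `f ∈ C_{n+1}`, setting `Y = f([n+1]) \ {n+1}` and
`X = {i ∈ f⁻¹(Y) : i = max f⁻¹(f(i))}`, we have `X ≤ Y` in `Pₙ` and `f = f_{X,Y}`. -/
theorem eq_fXY_of_mem_catalan (n : ℕ) (f : Fin (n+1) → Fin (n+1))
    (hmono : Monotone f) (hincr : ∀ i, i ≤ f i)
    (Y X : Finset (Fin (n+1)))
    (hYdef : Y = (Finset.univ.image f).erase (Fin.last n))
    (hXdef : X = Finset.univ.filter (fun i => f i ∈ Y ∧ ∀ j, f j = f i → j ≤ i)) :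
    Fin.last n ∉ X ∧ Fin.last n ∉ Y ∧ Ple X Y ∧ f = fXY X Y := by
  have hXmem : ∀ x, x ∈ X ↔ f x ∈ Y ∧ ∀ j, f j = f x → j ≤ x := by simp [hXdef]
  have hYmem : ∀ y, y ∈ Y ↔ y ≠ Fin.last n ∧ ∃ x, f x = y := by simp [hYdef]
  have hlast : f (Fin.last n) = Fin.last n := (hincr _).antisymm' (Fin.le_last _)
  have hlastY : Fin.last n ∉ Y := fun h => ((hYmem _).1 h).1 rfl
  have hXlt : ∀ x ∈ X, ∀ z, x < z → f x < f z := fun x hx _ =>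
    hmono.apply_lt_apply_of_fiber_le ((hXmem x).1 hx).2
  have himage : X.image f = Y :=
    image_eq_of_mem_iff_fiber_le (fun y hy => ((hYmem y).1 hy).2) hXmem
  have hsort : (X.sort (· ≤ ·)).map f = Y.sort (· ≤ ·) := by
    rw [← himage]
    exact StrictMonoOn.map_sort_eq_sort_image fun a ha b _ hab => hXlt a ha b hab
  refine ⟨fun h => hlastY (hlast ▸ ((hXmem _).1 h).1), hlastY, ?_, ?_⟩
  · rw [Ple, ← hsort, List.forall₂_map_right_iff, List.forall₂_same]
    exact fun x _ => hincr x
  · funext i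
    refine (fXY_apply_eq hlastY ?_ ?_).symm
    · by_cases h : f i = Fin.last n
      · exact .inr h
      · exact .inl ((hYmem _).2 ⟨h, i, rfl⟩)
    · rw [← himage]
      exact hmono.card_filter_lt_eq_card_filter_image_lt hXlt i
end

section
/- The map (X,Y) ↦ f_{X,Y} is a bijection from the set of ordered pairs (X,Y) of subsets of [n] with X ≤ Y in P_n onto the Catalan monoid C_{n+1}. -/
/-! The inverse sends `f ∈ C_{n+1}` to `(X, f(X))`, where `X` is the set of ascents of `f`
(points `i` with `f i < f (i+1)`). As `#{x ∈ X | x < i}` is the index of the first ascent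
`≥ i`, `f_{X,f(X)}(i)` is the value of `f` at that ascent (or `n+1` if there is none), and this
is `f i` because `f` is constant between ascents. Conversely, `f_{X,Y}` sends `x_j` to `y_j`,
and since `y₁ < ⋯ < y_k < n+1` it ascends exactly when `#{x ∈ X | x < i}` does, i.e. on `X`. -/

open Finset Order

namespace List

variable {α β : Type*}

lemma SortedLE.monotone_getD [Preorder α] {l : List α} {d : α} (hl : l.SortedLE)
    (hd : ∀ a ∈ l, a ≤ d) : Monotone (l.getD · d) := by
  intro i j hij
  dsimp only
  by_cases hj : j < l.length
  · simp only [getD_eq_getElem _ _ hj, getD_eq_getElem _ _ (hij.trans_lt hj)]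
    exact hl.monotone_get (Fin.mk_le_mk.2 hij)
  · rw [getD_eq_default _ _ (not_lt.1 hj)]
    by_cases hi : i < l.length
    · rw [getD_eq_getElem _ _ hi]
      exact hd _ (getElem_mem hi)
    · rw [getD_eq_default _ _ (not_lt.1 hi)]

lemma SortedLT.strictMonoOn_getD [Preorder α] {l : List α} {d : α} (hl : l.SortedLT)
    (hd : ∀ a ∈ l, a < d) : StrictMonoOn (l.getD · d) (Set.Iic l.length) := by
  intro i _ j hj hij
  have hi : i < l.length := hij.trans_le hj
  simp only [getD_eq_getElem _ _ hi]
  by_cases hj' : j < l.length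
  · rw [getD_eq_getElem _ _ hj']
    exact hl.strictMono_get (Fin.mk_lt_mk.2 hij)
  · rw [getD_eq_default _ _ (not_lt.1 hj')]
    exact hd _ (getElem_mem hi)

lemma Forall₂.rel_getD {R : α → β → Prop} {l : List α} {l' : List β} {d : α} {d' : β}
    (h : Forall₂ R l l') (hd : R d d') (k : ℕ) : R (l.getD k d) (l'.getD k d') := by
  obtain ⟨hlen, hR⟩ := forall₂_iff_get.1 h
  by_cases hk : k < l.length
  · rw [getD_eq_getElem _ _ hk, getD_eq_getElem _ _ (hlen ▸ hk)]
    exact hR k hk (hlen ▸ hk)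
  · rwa [getD_eq_default _ _ (not_lt.1 hk), getD_eq_default _ _ (hlen ▸ not_lt.1 hk)]

end List

namespace Finset

section LinearOrder

variable {α : Type*} [LinearOrder α] (X : Finset α)

lemma card_filter_lt_sort_getElem {j : ℕ} (hj : j < X.sort.length) :
    #{x ∈ X | x < X.sort[j]} = j := by
  have hX : {x ∈ X | x < X.sort[j]} = (X.sort.take j).toFinset := by
    ext x
    rw [mem_filter, List.mem_toFinset, List.mem_take_iff_getElem, ← mem_sort (· ≤ ·),
      List.mem_iff_getElem]
    constructor
    · rintro ⟨⟨k, hk, rfl⟩, hkj⟩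
      exact ⟨k, lt_min ((X.sortedLT_sort.getElem_lt_getElem_iff).1 hkj) hk, rfl⟩
    · rintro ⟨k, hk, rfl⟩
      exact ⟨⟨k, _, rfl⟩, X.sortedLT_sort.getElem_lt_getElem_iff.2 (lt_min_iff.1 hk).1⟩
  rw [hX, List.toFinset_card_of_nodup ((X.sort_nodup _).sublist (List.take_sublist _ _)),
    List.length_take, min_eq_left hj.le]

lemma card_filter_lt_mono : Monotone fun i => #{x ∈ X | x < i} :=
  fun _ _ hij => card_le_card (monotone_filter_right X fun _ _ hx => hx.trans_le hij)

lemma card_filter_lt_lt_of_mem {a b : α} (ha : a ∈ X) (hab : a < b) :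
    #{x ∈ X | x < a} < #{x ∈ X | x < b} := by
  refine card_lt_card ((ssubset_iff_of_subset ?_).2 ⟨a, by simp [ha, hab], by simp⟩)
  exact monotone_filter_right X fun _ _ hx => hx.trans hab

lemma sort_getElem_lt_iff {j : ℕ} (hj : j < X.sort.length) (i : α) :
    X.sort[j] < i ↔ j < #{x ∈ X | x < i} := by
  have hrank := X.card_filter_lt_sort_getElem hj
  constructor
  · intro h
    have := X.card_filter_lt_lt_of_mem ((mem_sort _).1 (List.getElem_mem hj)) h
    rwa [hrank] at this
  · intro h
    by_contra! hle
    have := X.card_filter_lt_mono hle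
    simp only [hrank] at this
    exact this.not_gt h

lemma le_sort_getD_card_filter_lt {i d : α} (hid : i ≤ d) :
    i ≤ X.sort.getD #{x ∈ X | x < i} d := by
  by_cases h : #{x ∈ X | x < i} < X.sort.length
  · rw [List.getD_eq_getElem _ _ h]
    exact not_lt.1 fun hlt => lt_irrefl _ ((X.sort_getElem_lt_iff h i).1 hlt)
  · rwa [List.getD_eq_default _ _ (not_lt.1 h)]

lemma sort_getD_card_filter_lt_le {i t : α} (d : α) (ht : t ∈ X) (hit : i ≤ t) :
    X.sort.getD #{x ∈ X | x < i} d ≤ t := by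
  obtain ⟨k, hk, rfl⟩ := List.mem_iff_getElem.1 ((mem_sort (· ≤ ·)).2 ht)
  have hck : #{x ∈ X | x < i} ≤ k :=
    not_lt.1 fun h => hit.not_gt ((X.sort_getElem_lt_iff hk i).2 h)
  rw [List.getD_eq_getElem _ _ (hck.trans_lt hk)]
  exact X.sortedLT_sort.getElem_le_getElem_iff.2 hck

lemma card_filter_lt_lt_card_filter_lt_succ_iff [SuccOrder α] {i : α} (hi : ¬IsMax i) :
    #{x ∈ X | x < i} < #{x ∈ X | x < succ i} ↔ i ∈ X := by
  refine ⟨fun h => ?_, fun hiX => X.card_filter_lt_lt_of_mem hiX (lt_succ_of_not_isMax hi)⟩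
  by_contra hiX
  have : {x ∈ X | x < succ i} = {x ∈ X | x < i} := by
    ext x
    simp only [mem_filter, lt_succ_iff_of_not_isMax hi, and_congr_right_iff]
    exact fun hx => (ne_of_mem_of_not_mem hx hiX).le_iff_lt
  exact h.ne (congrArg card this).symm

lemma sort_image_of_strictMonoOn {β : Type*} [LinearOrder β] {f : α → β}
    (hf : StrictMonoOn f X) : (X.image f).sort = X.sort.map f := by
  refine (sortedLT_sort _).eq_of_mem_iff ?_ fun b => by simp
  rw [List.sortedLT_iff_pairwise, List.pairwise_map]
  exact X.sortedLT_sort.pairwise.imp_of_mem fun ha hb hab =>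
    hf ((mem_sort _).1 ha) ((mem_sort _).1 hb) hab

lemma ple_image_of_strictMonoOn {f : α → α} (hf : StrictMonoOn f X) (hle : ∀ x ∈ X, x ≤ f x) :
    Ple X (X.image f) := by
  rw [Ple, X.sort_image_of_strictMonoOn hf, List.forall₂_map_right_iff]
  exact List.forall₂_same.2 fun x hx => hle x ((mem_sort _).1 hx)

end LinearOrder

end Finset

section Ascents

variable {α β : Type*} [PartialOrder α] [SuccOrder α]

lemma apply_le_of_forall_Ico_not_lt_succ [IsSuccArchimedean α] [LinearOrder β] {f : α → β}
    {a b : α} (hab : a ≤ b) (h : ∀ t ∈ Set.Ico a b, ¬f t < f (succ t)) : f b ≤ f a := by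
  revert h
  refine Succ.rec (P := fun b _ => (∀ t ∈ Set.Ico a b, ¬f t < f (succ t)) → f b ≤ f a)
    (fun _ => le_rfl) (fun b hab ih h => ?_) hab
  have hsucc : f (succ b) ≤ f b := by
    rcases (le_succ b).lt_or_eq with hb | hb
    · exact not_lt.1 (h b ⟨hab, hb⟩)
    · rw [← hb]
  exact hsucc.trans (ih fun t ht => h t ⟨ht.1, ht.2.trans_le (le_succ b)⟩)

variable [Fintype α] [Preorder β] [DecidableLT β]

def ascents (f : α → β) : Finset α := {i | f i < f (succ i)}

variable {f : α → β}

@[simp]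
lemma mem_ascents {i : α} : i ∈ ascents f ↔ f i < f (succ i) := by
  simp [ascents]

lemma top_notMem_ascents [OrderTop α] : ⊤ ∉ ascents f := by
  simp

lemma top_notMem_image_ascents [DecidableEq β] [OrderTop β] : ⊤ ∉ (ascents f).image f := by
  simp only [mem_image, mem_ascents, not_exists, not_and]
  exact fun _ hx => (hx.trans_le le_top).ne

lemma Monotone.strictMonoOn_ascents (hf : Monotone f) : StrictMonoOn f (ascents f) :=
  fun _ hx _ _ hxy => (mem_ascents.1 hx).trans_le (hf (succ_le_of_lt hxy))

end Ascents

section CatalanMonoid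

variable {n : ℕ}

lemma fXY_eq_getD (X Y : Finset (Fin (n+1))) (i : Fin (n+1)) :
    fXY X Y i = Y.sort.getD #{x ∈ X | x < i} (Fin.last n) := by
  unfold fXY
  split_ifs with h
  · rw [List.getD_eq_getElem _ _ h, List.get_eq_getElem]
  · rw [List.getD_eq_default _ _ (not_lt.1 h)]

lemma monotone_fXY (X Y : Finset (Fin (n+1))) : Monotone (fXY X Y) := by
  intro i j hij
  simp only [fXY_eq_getD]
  exact Y.sortedLT_sort.sortedLE.monotone_getD (fun a _ => Fin.le_last a)
    (X.card_filter_lt_mono hij)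

lemma le_fXY {X Y : Finset (Fin (n+1))} (hXY : Ple X Y) (i : Fin (n+1)) : i ≤ fXY X Y i := by
  rw [fXY_eq_getD]
  exact (X.le_sort_getD_card_filter_lt (Fin.le_last i)).trans (hXY.rel_getD le_rfl _)

lemma image_fXY {X Y : Finset (Fin (n+1))} (hXY : Ple X Y) : X.image (fXY X Y) = Y := by
  have hmap : X.sort.map (fXY X Y) = Y.sort := by
    refine List.ext_getElem (by simpa using hXY.length_eq) fun j hj _ => ?_
    rw [List.getElem_map, fXY_eq_getD, card_filter_lt_sort_getElem _ (by simpa using hj),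
      List.getD_eq_getElem]
  ext y
  rw [← mem_sort (· ≤ ·) (s := Y), ← hmap]
  simp

lemma ascents_fXY {X Y : Finset (Fin (n+1))} (hX : Fin.last n ∉ X) (hY : Fin.last n ∉ Y)
    (hXY : Ple X Y) : ascents (fXY X Y) = X := by
  ext i
  by_cases hi : IsMax i
  · obtain rfl := hi.eq_top
    exact iff_of_false top_notMem_ascents hX
  have hrank : ∀ j, #{x ∈ X | x < j} ∈ Set.Iic Y.sort.length := fun j => by
    simpa [← hXY.length_eq] using card_filter_le _ _
  rw [mem_ascents, fXY_eq_getD, fXY_eq_getD,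
    (Y.sortedLT_sort.strictMonoOn_getD _).lt_iff_lt (hrank _) (hrank _),
    X.card_filter_lt_lt_card_filter_lt_succ_iff hi]
  exact fun y hy => Fin.lt_last_iff_ne_last.2 fun h => hY (h ▸ (mem_sort _).1 hy)

lemma fXY_ascents {f : Fin (n+1) → Fin (n+1)} (hf : Monotone f) (hle : ∀ i, i ≤ f i) :
    fXY (ascents f) ((ascents f).image f) = f := by
  funext i
  -- `f` fixes the default value `Fin.last n` of `getD`, so `getD` commutes with `map f`.
  have hlast : f (Fin.last n) = Fin.last n := top_le_iff.1 (hle ⊤)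
  rw [fXY_eq_getD, (ascents f).sort_image_of_strictMonoOn hf.strictMonoOn_ascents, ← hlast,
    List.getD_map]
  set z := (ascents f).sort.getD #{x ∈ ascents f | x < i} (Fin.last n)
  have hiz : i ≤ z := (ascents f).le_sort_getD_card_filter_lt (Fin.le_last i)
  refine le_antisymm (apply_le_of_forall_Ico_not_lt_succ hiz fun t ht hft => ?_) (hf hiz)
  exact ht.2.not_ge ((ascents f).sort_getD_card_filter_lt_le _ (mem_ascents.2 hft) ht.1)

end CatalanMonoid

/-- `(X, Y) ↦ f_{X,Y}` is a bijection from the set of ordered pairs of subsets of `[n]`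
with `X ≤ Y` in `Pₙ` onto the Catalan monoid `C_{n+1}` (the set of order-preserving,
weakly increasing self-maps of `[n+1]`). -/
theorem fXY_bijOn (n : ℕ) :
    Set.BijOn (fun p : Finset (Fin (n+1)) × Finset (Fin (n+1)) => fXY p.1 p.2)
      {p | Fin.last n ∉ p.1 ∧ Fin.last n ∉ p.2 ∧ Ple p.1 p.2}
      {f | Monotone f ∧ ∀ i, i ≤ f i} := by
  refine Set.InvOn.bijOn (f' := fun f => (ascents f, (ascents f).image f)) ⟨?_, ?_⟩ ?_ ?_
  · rintro ⟨X, Y⟩ ⟨hX, hY, hXY⟩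
    simp only [ascents_fXY hX hY hXY, image_fXY hXY]
  · rintro f ⟨hf, hle⟩
    exact fXY_ascents hf hle
  · rintro ⟨X, Y⟩ ⟨-, -, hXY⟩
    exact ⟨monotone_fXY X Y, le_fXY hXY⟩
  · rintro f ⟨hf, hle⟩
    exact ⟨top_notMem_ascents, top_notMem_image_ascents,
      (ascents f).ple_image_of_strictMonoOn hf.strictMonoOn_ascents fun x _ => hle x⟩
end

section
/- The cardinality of the Catalan monoid C_n (the monoid of order-preserving, weakly increasing self-maps of [n]) equals the n-th Catalan number. -/
abbrev CatSet (n : ℕ) := {f : Fin n → Fin n // Monotone f ∧ ∀ i, i ≤ f i}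

namespace CatAux

/-- Extension of a map in `CatSet m` to all of `ℕ` (identity above `m`). -/
def exf {m : ℕ} (a : CatSet m) : ℕ → ℕ :=
  fun k => if hk : k < m then (a.1 ⟨k, hk⟩ : ℕ) else k

lemma exf_eq {m : ℕ} (a : CatSet m) {k : ℕ} (hk : k < m) :
    exf a k = (a.1 ⟨k, hk⟩ : ℕ) := dif_pos hk

lemma exf_lt {m : ℕ} (a : CatSet m) {k : ℕ} (hk : k < m) : exf a k < m := by
  rw [exf_eq a hk]; exact (a.1 ⟨k, hk⟩).2

lemma le_exf {m : ℕ} (a : CatSet m) (k : ℕ) : k ≤ exf a k := by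
  unfold exf
  split
  · next hk => exact a.2.2 ⟨k, hk⟩
  · exact le_rfl

lemma exf_mono {m : ℕ} (a : CatSet m) : Monotone (exf a) := by
  intro k l hkl
  unfold exf
  split <;> split
  · next hk hl => exact a.2.1 (show (⟨k, hk⟩ : Fin m) ≤ ⟨l, hl⟩ from hkl)
  · next hk hl => exact le_trans (le_of_lt ((a.1 ⟨k, hk⟩).2)) (by omega)
  · omega
  · exact hkl

lemma exf_ext {m : ℕ} (a b : CatSet m) (h : ∀ k, k < m → exf a k = exf b k) : a = b := by
  apply Subtype.ext; funext k
  apply Fin.ext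
  have := h k k.2
  rwa [exf_eq a k.2, exf_eq b k.2] at this

/-- Recombination function on ℕ. -/
def F (i : ℕ) (g h : ℕ → ℕ) : ℕ → ℕ :=
  fun k => if k < i then g k + 1 else if k = i then i else h (k - (i + 1)) + (i + 1)

variable {i : ℕ} {g h : ℕ → ℕ}

lemma F_of_lt {k : ℕ} (hk : k < i) : F i g h k = g k + 1 := if_pos hk

lemma F_of_eq : F i g h i = i := by unfold F; rw [if_neg (lt_irrefl i), if_pos rfl]

lemma F_of_gt {k : ℕ} (hk : i < k) : F i g h k = h (k - (i + 1)) + (i + 1) := by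
  unfold F; rw [if_neg (by omega), if_neg (by omega)]

lemma F_mono (hgm : Monotone g) (hglt : ∀ k, k < i → g k < i)
    (hhm : Monotone h) (hhge : ∀ k, k ≤ h k) : Monotone (F i g h) := by
  intro k l hkl
  rcases lt_trichotomy k i with hk | hk | hk <;> rcases lt_trichotomy l i with hl | hl | hl <;>
    try omega
  · rw [F_of_lt hk, F_of_lt hl]; exact Nat.succ_le_succ (hgm hkl)
  · rw [F_of_lt hk, hl, F_of_eq]; have := hglt k hk; omega
  · rw [F_of_lt hk, F_of_gt hl]; have := hglt k hk; omega
  · rw [hk, hl]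
  · rw [hk, F_of_eq, F_of_gt hl]; omega
  · rw [F_of_gt hk, F_of_gt hl]
    have := hhm (show k - (i + 1) ≤ l - (i + 1) by omega)
    omega

lemma F_ge (hgge : ∀ k, k ≤ g k) (hhge : ∀ k, k ≤ h k) (k : ℕ) : k ≤ F i g h k := by
  rcases lt_trichotomy k i with hk | hk | hk
  · rw [F_of_lt hk]; have := hgge k; omega
  · rw [hk, F_of_eq]
  · rw [F_of_gt hk]; have := hhge (k - (i + 1)); omega

lemma F_bound {n : ℕ} (hin : i ≤ n) (hglt : ∀ k, k < i → g k < i)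
    (hhlt : ∀ k, k < n - i → h k < n - i) {k : ℕ} (hk : k ≤ n) : F i g h k ≤ n := by
  rcases lt_trichotomy k i with h1 | h1 | h1
  · rw [F_of_lt h1]; have := hglt k h1; omega
  · rw [h1, F_of_eq]; omega
  · rw [F_of_gt h1]
    have := hhlt (k - (i + 1)) (by omega)
    omega

variable {n : ℕ}

/-- The recombination map of the first-return decomposition. -/
def bwd (x : Σ j : Fin (n + 1), CatSet (j : ℕ) × CatSet (n - (j : ℕ))) :
    CatSet (n + 1) := by
  obtain ⟨i, g, h⟩ := x
  have hglt : ∀ k, k < (i : ℕ) → exf g k < (i : ℕ) := fun k hk => exf_lt g hk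
  have hhlt : ∀ k, k < n - (i : ℕ) → exf h k < n - (i : ℕ) := fun k hk => exf_lt h hk
  refine ⟨fun k => ⟨F i (exf g) (exf h) k,
      Nat.lt_succ_of_le (F_bound (by omega) hglt hhlt (by omega : (k : ℕ) ≤ n))⟩, ?_, ?_⟩
  · intro a b hab
    exact F_mono (exf_mono g) hglt (exf_mono h) (le_exf h) (show (a : ℕ) ≤ b from hab)
  · intro k
    exact F_ge (le_exf g) (le_exf h) (k : ℕ)

lemma bwd_val (j : Fin (n + 1)) (g : CatSet (j : ℕ)) (h : CatSet (n - (j : ℕ)))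
    (k : ℕ) (hk : k < n + 1) :
    ((bwd ⟨j, g, h⟩).1 ⟨k, hk⟩ : ℕ) = F j (exf g) (exf h) k := rfl

lemma bwd_injective : Function.Injective (bwd (n := n)) := by
  rintro ⟨i, g, h⟩ ⟨i', g', h'⟩ heq
  have hval : ∀ k, (hk : k < n + 1) → F i (exf g) (exf h) k = F i' (exf g') (exf h') k := by
    intro k hk
    rw [← bwd_val i g h k hk, ← bwd_val i' g' h' k hk, heq]
  have hii : (i : ℕ) = (i' : ℕ) := by
    by_contra hne
    rcases Nat.lt_or_ge (i : ℕ) (i' : ℕ) with hlt | hge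
    · have := hval i i.2
      rw [F_of_eq, F_of_lt hlt] at this
      have := le_exf g' (i : ℕ)
      omega
    · have hlt : (i' : ℕ) < (i : ℕ) := by omega
      have := hval i' i'.2
      rw [F_of_eq, F_of_lt hlt] at this
      have := le_exf g (i' : ℕ)
      omega
  have hii' : i = i' := Fin.ext hii
  subst hii'
  have hg : g = g' := by
    apply exf_ext
    intro k hk
    have := hval k (by omega)
    rwa [F_of_lt hk, F_of_lt hk, Nat.add_right_cancel_iff] at this
  have hh : h = h' := by
    apply exf_ext
    intro k hk
    have := hval ((i : ℕ) + 1 + k) (by omega)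
    rw [F_of_gt (by omega), F_of_gt (by omega)] at this
    have e : (i : ℕ) + 1 + k - ((i : ℕ) + 1) = k := by omega
    rw [e] at this
    omega
  rw [hg, hh]

lemma bwd_surjective : Function.Surjective (bwd (n := n)) := by
  intro f
  have hfmono := exf_mono f
  have hfle := le_exf f
  have hflt : ∀ k, k < n + 1 → exf f k < n + 1 := fun k hk => exf_lt f hk
  have hP : ∃ m, 0 < m ∧ ∀ k < m, exf f k < m := ⟨n + 1, by omega, hflt⟩
  classical
  set j := Nat.find hP with hjdef
  have hjP : 0 < j ∧ ∀ k < j, exf f k < j := Nat.find_spec hP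
  have hjmin : ∀ m < j, ¬(0 < m ∧ ∀ k < m, exf f k < m) := fun m hm => Nat.find_min hP hm
  have hjn : j ≤ n + 1 := Nat.find_min' hP ⟨by omega, hflt⟩
  have hj1 : 1 ≤ j := hjP.1
  have hstrict : ∀ k, k + 1 < j → k + 1 ≤ exf f k := by
    intro k hk
    have := hjmin (k + 1) hk
    push_neg at this
    obtain ⟨l, hl1, hl2⟩ := this (by omega)
    exact le_trans hl2 (hfmono (by omega : l ≤ k))
  have hin : j - 1 < n + 1 := by omega
  set g : CatSet (j - 1) := ⟨fun k => ⟨exf f k - 1, by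
      have hk : (k : ℕ) < j - 1 := k.2
      have h1 := hstrict k (by omega)
      have h2 := hjP.2 k (by omega)
      omega⟩, by
    intro a b hab
    have ha : (a : ℕ) < j - 1 := a.2
    have h1 := hstrict a (by omega)
    have h2 := hfmono (show (a : ℕ) ≤ (b : ℕ) from hab)
    show exf f a - 1 ≤ exf f b - 1
    omega, by
    intro k
    have hk : (k : ℕ) < j - 1 := k.2
    have h1 := hstrict k (by omega)
    show (k : ℕ) ≤ exf f k - 1
    omega⟩ with hgdef
  set h : CatSet (n - (j - 1)) := ⟨fun k => ⟨exf f (j + k) - j, by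
      have hk : (k : ℕ) < n - (j - 1) := k.2
      have h1 := hflt (j + k) (by omega)
      have h2 := hfle (j + k)
      omega⟩, by
    intro a b hab
    have h1 := hfmono (show j + (a : ℕ) ≤ j + (b : ℕ) by
      exact Nat.add_le_add_left (show (a : ℕ) ≤ b from hab) j)
    show exf f (j + a) - j ≤ exf f (j + b) - j
    omega, by
    intro k
    have h1 := hfle (j + (k : ℕ))
    show (k : ℕ) ≤ exf f (j + k) - j
    omega⟩ with hhdef
  refine ⟨⟨⟨j - 1, hin⟩, g, h⟩, ?_⟩
  apply exf_ext
  intro k hk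
  rw [show exf (bwd ⟨⟨j - 1, hin⟩, g, h⟩) k = ((bwd ⟨⟨j - 1, hin⟩, g, h⟩).1 ⟨k, hk⟩ : ℕ) from
    exf_eq _ hk]
  rw [bwd_val]
  simp only [Fin.val_mk]
  have hgval : ∀ l, (hl : l < j - 1) → exf g l = exf f l - 1 := by
    intro l hl
    rw [exf_eq g hl]
  have hhval : ∀ l, (hl : l < n - (j - 1)) → exf h l = exf f (j + l) - j := by
    intro l hl
    rw [exf_eq h hl]
  rcases lt_trichotomy k (j - 1) with hlt | heq | hgt
  · rw [F_of_lt hlt, hgval k hlt]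
    have := hstrict k (by omega)
    omega
  · rw [heq, F_of_eq]
    have := hjP.2 (j - 1) (by omega)
    have := hfle (j - 1)
    omega
  · rw [F_of_gt hgt]
    have hkk : k - (j - 1 + 1) < n - (j - 1) := by omega
    rw [hhval _ hkk]
    have he2 : j + (k - (j - 1 + 1)) = k := by omega
    rw [he2]
    have := hfle k
    omega

instance catSetFintype (m : ℕ) : Fintype (CatSet m) := Subtype.fintype _

lemma card_succ :
    Fintype.card (CatSet (n + 1)) =
      ∑ i : Fin (n + 1), Fintype.card (CatSet (i : ℕ)) * Fintype.card (CatSet (n - (i : ℕ))) := by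
  rw [← Fintype.card_congr (Equiv.ofBijective _ ⟨bwd_injective (n := n), bwd_surjective⟩)]
  rw [Fintype.card_sigma]
  exact Finset.sum_congr rfl fun i _ => Fintype.card_prod _ _

lemma card_zero : Fintype.card (CatSet 0) = 1 := by
  have : Unique (CatSet 0) :=
    ⟨⟨⟨fun k => k.elim0, fun a => a.elim0, fun a => a.elim0⟩⟩,
      fun a => Subtype.ext (funext fun k => k.elim0)⟩
  exact Fintype.card_unique

lemma card_eq_catalan : ∀ m : ℕ, Fintype.card (CatSet m) = catalan m := by
  intro m
  induction m using Nat.strong_induction_on with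
  | _ m ih =>
    match m with
    | 0 => rw [card_zero, catalan_zero]
    | n + 1 =>
      rw [card_succ, catalan_succ]
      exact Finset.sum_congr rfl fun i _ => by
        rw [ih i (by omega), ih (n - (i : ℕ)) (by omega)]

end CatAux

/-- The Catalan monoid `Cₙ`: the submonoid of self-maps of `[n]` (modelled as `Fin n`),
under composition (`f * g = f ∘ g`), consisting of the order-preserving, weakly
increasing maps. -/
def catalanMonoid (n : ℕ) : Submonoid (Function.End (Fin n)) where
  carrier := {f | Monotone f ∧ ∀ i, i ≤ f i}
  one_mem' := ⟨monotone_id, fun _ => le_rfl⟩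
  mul_mem' := fun hf hg => ⟨hf.1.comp hg.1, fun i => le_trans (hg.2 i) (hf.2 _)⟩

/-- The cardinality of the Catalan monoid `Cₙ` is the `n`-th Catalan number. -/
theorem card_catalanMonoid (n : ℕ) : Nat.card (catalanMonoid n) = catalan n := by
  have e : catalanMonoid n ≃ CatSet n :=
    { toFun := fun f => ⟨f.1, f.2⟩
      invFun := fun f => ⟨f.1, f.2⟩
      left_inv := fun f => rfl
      right_inv := fun f => rfl }
  rw [Nat.card_congr e, Nat.card_eq_fintype_card, CatAux.card_eq_catalan]
end

section
/- Proposition 2.1(1): If S is a partial cross-section of f = f_{X,Y} in C_{n+1}, then S ⪯ X, i.e., either |S| < |X|, or |S| = |X| and S ≤ X in P_n. -/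
/-- `S` is a partial cross-section of `f : [n+1] → [n+1]`: `S ⊆ [n]`
(i.e. `n+1 ∉ S`, with `n+1` modelled as `Fin.last n`), `n+1 ∉ f(S)`, and `f`
restricted to `S` is injective. -/
def PCS {n : ℕ} (f : Fin (n+1) → Fin (n+1)) : Set (Finset (Fin (n+1))) :=
  {S | Fin.last n ∉ S ∧ Fin.last n ∉ S.image f ∧ Set.InjOn f ↑S}

/-!
Write `c(a)` for the number of elements of `X` below `a`, so that `f_{X,Y}(a)` is the
`c(a)`-th element of `Y`, or `n+1` when `c(a) = |X|`. On a partial cross-section `S` the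
monotone map `c` is therefore injective with values in `{0, …, |X| - 1}`, whence `|S| ≤ |X|`.
When `|S| = |X|`, `c` maps `S` onto `{0, …, |X| - 1}` preserving order, so `c(sᵢ) = i`: fewer
than `i + 1` elements of `X` lie below `sᵢ`, which says `sᵢ ≤ xᵢ`.
-/

open Finset

section CountBelow

variable {α : Type*} [LinearOrder α]

theorem monotone_card_filter_lt (X : Finset α) : Monotone fun a => (X.filter (· < a)).card :=
  fun _ _ hab => card_le_card (monotone_filter_right X fun _ _ hx => hx.trans_le hab)

theorem card_filter_lt_orderEmbOfFin (s : Finset α) {k : ℕ} (h : s.card = k) (i : Fin k) :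
    (s.filter (· < s.orderEmbOfFin h i)).card = i := by
  have : s.filter (· < s.orderEmbOfFin h i) = (Iio i).map (s.orderEmbOfFin h).toEmbedding := by
    ext a
    simp only [mem_filter, mem_map, mem_Iio, RelEmbedding.coe_toEmbedding]
    constructor
    · rintro ⟨ha, hlt⟩
      obtain ⟨j, rfl⟩ : a ∈ Set.range (s.orderEmbOfFin h) := by rwa [range_orderEmbOfFin]
      exact ⟨j, (s.orderEmbOfFin h).lt_iff_lt.1 hlt, rfl⟩
    · rintro ⟨j, hj, rfl⟩
      exact ⟨orderEmbOfFin_mem s h j, (s.orderEmbOfFin h).strictMono hj⟩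
  rw [this, card_map, Fin.card_Iio]

theorem le_orderEmbOfFin_of_card_filter_lt_le (s : Finset α) {k : ℕ} (h : s.card = k)
    {i : Fin k} {a : α} (ha : (s.filter (· < a)).card ≤ i) : a ≤ s.orderEmbOfFin h i := by
  by_contra! hlt
  have hsub : (Iic i).map (s.orderEmbOfFin h).toEmbedding ⊆ s.filter (· < a) := by
    intro b hb
    simp only [mem_map, mem_Iic] at hb
    obtain ⟨j, hj, rfl⟩ := hb
    exact mem_filter.2 ⟨orderEmbOfFin_mem s h j, ((s.orderEmbOfFin h).monotone hj).trans_lt hlt⟩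
  have := card_le_card hsub
  rw [card_map, Fin.card_Iic] at this
  omega

theorem ple_of_forall_orderEmbOfFin_le {S X : Finset α} {k : ℕ} (hS : S.card = k)
    (hX : X.card = k) (hle : ∀ i, S.orderEmbOfFin hS i ≤ X.orderEmbOfFin hX i) : Ple S X := by
  rw [Ple, List.forall₂_iff_get]
  refine ⟨by simp [hS, hX], fun i hiS hiX => ?_⟩
  rw [length_sort] at hiS
  simpa [orderEmbOfFin_apply] using hle ⟨i, hS ▸ hiS⟩

theorem le_card_filter_lt_of_injOn {S : Finset α} {c : α → ℕ} (hc : Monotone c)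
    (hinj : Set.InjOn c S) (hlt : ∀ s ∈ S, c s < S.card) {s : α} (hs : s ∈ S) :
    c s ≤ (S.filter (· < s)).card := by
  have himage : S.image c = range S.card :=
    eq_of_subset_of_card_le (image_subset_iff.2 fun t ht => mem_range.2 (hlt t ht))
      (by rw [card_range, card_image_of_injOn hinj])
  have hsub : range (c s) ⊆ (S.filter (· < s)).image c := by
    intro j hj
    have : j ∈ S.image c := himage ▸ mem_range.2 ((mem_range.1 hj).trans (hlt s hs))
    obtain ⟨t, ht, rfl⟩ := mem_image.1 this
    exact mem_image_of_mem c (mem_filter.2 ⟨ht, lt_of_not_ge fun hst =>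
      (mem_range.1 hj).not_ge (hc hst)⟩)
  calc c s = (range (c s)).card := (card_range _).symm
    _ ≤ ((S.filter (· < s)).image c).card := card_le_card hsub
    _ ≤ (S.filter (· < s)).card := card_image_le

theorem ple_of_injOn_card_filter_lt {S X : Finset α} (hcard : S.card = X.card)
    (hinj : Set.InjOn (fun a => (X.filter (· < a)).card) S)
    (hlt : ∀ s ∈ S, (X.filter (· < s)).card < X.card) : Ple S X := by
  refine ple_of_forall_orderEmbOfFin_le hcard rfl fun i => ?_
  refine le_orderEmbOfFin_of_card_filter_lt_le X rfl ?_
  calc (X.filter (· < S.orderEmbOfFin hcard i)).card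
      ≤ (S.filter (· < S.orderEmbOfFin hcard i)).card :=
        le_card_filter_lt_of_injOn (monotone_card_filter_lt X) hinj (hcard ▸ hlt)
          (orderEmbOfFin_mem S hcard i)
    _ = i := card_filter_lt_orderEmbOfFin S hcard i

end CountBelow

theorem card_filter_lt_lt_of_fXY_ne_last {n : ℕ} {X Y : Finset (Fin (n+1))} (hXY : Ple X Y)
    {a : Fin (n+1)} (ha : fXY X Y a ≠ Fin.last n) : (X.filter (· < a)).card < X.card := by
  by_contra h
  refine ha (dif_neg ?_)
  rwa [← hXY.length_eq, length_sort]

theorem pcs_ple_refined_left_general (n : ℕ) (X Y : Finset (Fin (n+1)))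
    (hXY : Ple X Y)
    (S : Finset (Fin (n+1))) (hS : S ∈ PCS (fXY X Y)) :
    S.card < X.card ∨ (S.card = X.card ∧ Ple S X) := by
  obtain ⟨-, hlast, hinj⟩ := hS
  have hlt : ∀ s ∈ S, (X.filter (· < s)).card < X.card := fun s hs =>
    card_filter_lt_lt_of_fXY_ne_last hXY fun h => hlast (mem_image.2 ⟨s, hs, h⟩)
  -- `fXY X Y a` depends on `a` only through the number of elements of `X` below `a`.
  have hinjc : Set.InjOn (fun a => (X.filter (· < a)).card) S :=
    fun s hs t ht hst => hinj hs ht (by simp only [fXY, hst])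
  have hle : S.card ≤ X.card := by
    simpa using card_le_card_of_injOn _ (fun s hs => mem_range.2 (hlt s hs)) hinjc
  rcases hle.lt_or_eq with h | h
  exacts [Or.inl h, Or.inr ⟨h, ple_of_injOn_card_filter_lt h hinjc hlt⟩]

/-- Proposition 2.1(1): if `S` is a partial cross-section of `f = f_{X,Y}`, then
`S ⪯ X`, i.e. `|S| < |X|`, or `|S| = |X|` and `S ≤ X` in `Pₙ`. -/
theorem pcs_ple_refined_left (n : ℕ) (X Y : Finset (Fin (n+1)))
    (hX : Fin.last n ∉ X) (hY : Fin.last n ∉ Y) (hXY : Ple X Y)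
    (S : Finset (Fin (n+1))) (hS : S ∈ PCS (fXY X Y)) :
    S.card < X.card ∨ (S.card = X.card ∧ Ple S X) :=
  pcs_ple_refined_left_general n X Y hXY S hS
end

section
/- If S is a partial cross-section of f = f_{X,Y} in C_{n+1} and S ≠ X, then S ≺ X, i.e., either |S| < |X|, or |S| = |X|, S ≤ X in P_n and S ≠ X. (Consequently X is the unique ⪯-maximal partial cross-section of f_{X,Y}.) -/
/-- If `S` is a partial cross-section of `f = f_{X,Y}` and `S ≠ X`, then `S ≺ X`:
either `|S| < |X|`, or `|S| = |X|`, `S ≤ X` in `Pₙ`, and `S ≠ X`.  (Consequently `X`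
is the unique `⪯`-maximal partial cross-section of `f_{X,Y}`.) -/
theorem pcs_plt_of_ne (n : ℕ) (X Y : Finset (Fin (n+1)))
    (hX : Fin.last n ∉ X) (hY : Fin.last n ∉ Y) (hXY : Ple X Y)
    (S : Finset (Fin (n+1))) (hS : S ∈ PCS (fXY X Y)) (hne : S ≠ X) :
    S.card < X.card ∨ (S.card = X.card ∧ Ple S X ∧ S ≠ X) := by
  obtain ⟨hlS, hlfS, hinj⟩ := hS
  set k := X.card with hk
  have hYk : Y.card = k := by
    have := List.Forall₂.length_eq hXY
    simpa using this.symm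
  set c : Fin (n+1) → ℕ := fun i => (X.filter (fun x => x < i)).card with hc
  have hmono : ∀ {i j : Fin (n+1)}, i ≤ j → c i ≤ c j := by
    intro i j hij
    apply Finset.card_le_card
    intro x hx
    simp only [Finset.mem_filter] at hx ⊢
    exact ⟨hx.1, lt_of_lt_of_le hx.2 hij⟩
  -- every s ∈ S has c s < k
  have hlt : ∀ s ∈ S, c s < k := by
    intro s hs
    have hfs : fXY X Y s ≠ Fin.last n := by
      intro heq
      exact hlfS (Finset.mem_image.2 ⟨s, hs, heq⟩)
    by_contra h
    have : fXY X Y s = Fin.last n := by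
      rw [fXY, dif_neg]
      rw [Finset.length_sort, hYk]
      exact h
    exact hfs this
  have hfeq : ∀ s ∈ S, ∀ (h : c s < (Y.sort (· ≤ ·)).length),
      fXY X Y s = (Y.sort (· ≤ ·)).get ⟨c s, h⟩ := by
    intro s hs h
    rw [fXY, dif_pos h]
  have hlen : (Y.sort (· ≤ ·)).length = k := by rw [Finset.length_sort, hYk]
  have hcinj : ∀ s ∈ S, ∀ t ∈ S, c s = c t → s = t := by
    intro s hs t ht hst
    have h1 : c s < (Y.sort (· ≤ ·)).length := by rw [hlen]; exact hlt s hs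
    have h2 : c t < (Y.sort (· ≤ ·)).length := by rw [hlen]; exact hlt t ht
    apply hinj hs ht
    rw [hfeq s hs h1, hfeq t ht h2]
    congr 1
    exact Fin.ext hst
  have hcard : S.card ≤ k := by
    have := Finset.card_le_card_of_injOn c
      (fun s hs => Finset.mem_range.2 (hlt s hs))
      (fun s hs t ht h => hcinj s hs t ht h) (t := Finset.range k)
    simpa using this
  rcases lt_or_eq_of_le hcard with h | hSk
  · exact Or.inl h
  · right
    refine ⟨hSk, ?_, hne⟩
    -- counting lemma
    have hcount : ∀ (a : Fin (n+1)) (j : Fin k), X.orderEmbOfFin hk.symm j < a →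
        (j : ℕ) + 1 ≤ c a := by
      intro a j hja
      have hsub : (Finset.Iic j).image (X.orderEmbOfFin hk.symm) ⊆
          X.filter (fun x => x < a) := by
        intro x hx
        simp only [Finset.mem_image, Finset.mem_Iic] at hx
        obtain ⟨i, hij, rfl⟩ := hx
        exact Finset.mem_filter.2 ⟨Finset.orderEmbOfFin_mem _ _ _,
          lt_of_le_of_lt ((X.orderEmbOfFin hk.symm).monotone hij) hja⟩
      calc (j : ℕ) + 1 = (Finset.Iic j).card := (Fin.card_Iic j).symm
        _ = ((Finset.Iic j).image (X.orderEmbOfFin hk.symm)).card :=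
            (Finset.card_image_of_injective _ (X.orderEmbOfFin hk.symm).injective).symm
        _ ≤ c a := Finset.card_le_card hsub
    -- the function g
    have hg' : StrictMono (fun j : Fin k => (⟨c (S.orderEmbOfFin hSk j),
        hlt _ (Finset.orderEmbOfFin_mem _ _ _)⟩ : Fin k)) := by
      intro i j hij
      have h1 : S.orderEmbOfFin hSk i < S.orderEmbOfFin hSk j :=
        (S.orderEmbOfFin hSk).strictMono hij
      have hle : c (S.orderEmbOfFin hSk i) ≤ c (S.orderEmbOfFin hSk j) := hmono h1.le
      have hne' : c (S.orderEmbOfFin hSk i) ≠ c (S.orderEmbOfFin hSk j) := by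
        intro h
        exact absurd (hcinj _ (Finset.orderEmbOfFin_mem _ _ _) _
          (Finset.orderEmbOfFin_mem _ _ _) h) h1.ne
      exact Fin.mk_lt_mk.mpr (lt_of_le_of_ne hle hne')
    have huniv : (Finset.univ : Finset (Fin k)).card = k := by simp
    have h1 := Finset.orderEmbOfFin_unique huniv
      (f := fun j : Fin k => (⟨c (S.orderEmbOfFin hSk j),
        hlt _ (Finset.orderEmbOfFin_mem _ _ _)⟩ : Fin k))
      (fun _ => Finset.mem_univ _) hg'
    have h2 := Finset.orderEmbOfFin_unique huniv (f := fun j : Fin k => j)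
      (fun _ => Finset.mem_univ _) strictMono_id
    have hgid : ∀ j : Fin k, c (S.orderEmbOfFin hSk j) = j := by
      intro j
      have := (congrFun h1 j).trans (congrFun h2 j).symm
      exact congrArg Fin.val this
    -- componentwise inequality
    have hmain : ∀ j : Fin k, S.orderEmbOfFin hSk j ≤ X.orderEmbOfFin hk.symm j := by
      intro j
      by_contra h
      push_neg at h
      have := hcount _ j h
      rw [hgid j] at this
      omega
    rw [Ple, List.forall₂_iff_get]
    constructor
    · rw [Finset.length_sort, Finset.length_sort, hSk]
    · intro i h1' h2'
      have hik : i < k := by rwa [Finset.length_sort, hSk] at h1'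
      have := hmain ⟨i, hik⟩
      rwa [Finset.orderEmbOfFin_apply, Finset.orderEmbOfFin_apply] at this
end

section
/- Let k be a commutative ring with unit. The k-linear map φ : kC_{n+1} → I(P_n, k) defined on basis elements by φ(f) = Σ_{S ∈ PCS(f)} (S, f(S)) is multiplicative on basis elements: for all f, g ∈ C_{n+1}, φ(f)·φ(g) = φ(fg), where fg denotes the composite i ↦ f(g(i)) and the product on the right-hand side of φ is taken in the incidence algebra I(P_n, k). -/
/-- The poset `Pₙ` of subsets of `[n]`, viewed inside `[n+1]`: finsets of
`Fin (n+1)` avoiding the top element `Fin.last n`. -/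
abbrev Pn (n : ℕ) := {S : Finset (Fin (n+1)) // Fin.last n ∉ S}

theorem Ple.refl {α : Type*} [LinearOrder α] (X : Finset α) : Ple X X :=
  List.forall₂_same.2 fun _ _ => le_rfl

theorem forall₂_le_trans {α : Type*} [Preorder α] :
    ∀ {l₁ l₂ l₃ : List α}, List.Forall₂ (· ≤ ·) l₁ l₂ → List.Forall₂ (· ≤ ·) l₂ l₃ →
      List.Forall₂ (· ≤ ·) l₁ l₃
  | _, _, _, List.Forall₂.nil, List.Forall₂.nil => List.Forall₂.nil
  | _, _, _, List.Forall₂.cons h₁ t₁, List.Forall₂.cons h₂ t₂ =>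
      List.Forall₂.cons (le_trans h₁ h₂) (forall₂_le_trans t₁ t₂)

theorem Ple.trans {α : Type*} [LinearOrder α] {X Y Z : Finset α}
    (h₁ : Ple X Y) (h₂ : Ple Y Z) : Ple X Z :=
  forall₂_le_trans h₁ h₂

/-- The incidence algebra `I(Pₙ, k)`: the free `k`-module on the ordered pairs
`(X, Y)` with `X ≤ Y` in `Pₙ`, with product `(U,V)(X,Y) = (X,V)` if `Y = U` and `0`
otherwise.  It is realised concretely as the `k`-subalgebra of matrices `M` indexed by
`Pₙ` such that `M Y X = 0` unless `X ≤ Y`, the basis pair `(X, Y)` being the matrix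
unit `stdBasisMatrix Y X 1`; indeed `E_{V,U} • E_{Y,X} = [U = Y] • E_{V,X}`,
which is exactly the required product of `(U,V)` and `(X,Y)`. -/
noncomputable def IncAlg (n : ℕ) (k : Type*) [CommRing k] :
    Subalgebra k (Matrix (Pn n) (Pn n) k) where
  carrier := {M | ∀ X Y : Pn n, ¬ Ple X.1 Y.1 → M Y X = 0}
  zero_mem' := fun _ _ _ => rfl
  add_mem' := fun {M N} hM hN X Y h => by
    simp only [Matrix.add_apply, hM X Y h, hN X Y h, add_zero]
  one_mem' := fun X Y h => by
    rw [Matrix.one_apply]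
    split
    · next heq => exact absurd (heq ▸ Ple.refl X.1) h
    · rfl
  mul_mem' := fun {M N} hM hN X Y h => by
    rw [Matrix.mul_apply]
    refine Finset.sum_eq_zero fun Z _ => ?_
    by_cases h₁ : Ple Z.1 Y.1
    · by_cases h₂ : Ple X.1 Z.1
      · exact absurd (Ple.trans h₂ h₁) h
      · rw [hN X Z h₂, mul_zero]
    · rw [hM Z Y h₁, zero_mul]
  algebraMap_mem' := fun r X Y h => by
    rw [Matrix.algebraMap_matrix_apply]
    split
    · next heq => exact absurd (heq ▸ Ple.refl X.1) h
    · rfl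

open Classical in
/-- The pair `(S, f(S))` as an element of `Pₙ × Pₙ` (junk value if `n+1 ∈ f(S)`,
which never happens for `S ∈ PCS f`). -/
noncomputable def imageP {n : ℕ} (f : Fin (n+1) → Fin (n+1)) (P : Pn n) : Pn n :=
  if h : Fin.last n ∉ P.1.image f then ⟨P.1.image f, h⟩ else P

open Classical in
/-- `φ(f) = ∑_{S ∈ PCS(f)} (S, f(S))`, where the basis pair `(S, f(S))` of
`I(Pₙ, k)` is the matrix unit with `1` in row `f(S)`, column `S`. -/
noncomputable def phi (n : ℕ) (k : Type*) [CommRing k] (f : Fin (n+1) → Fin (n+1)) :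
    Matrix (Pn n) (Pn n) k :=
  ∑ P ∈ Finset.univ.filter (fun P : Pn n => P.1 ∈ PCS f),
    Matrix.single (imageP f P) P (1 : k)

/-!
Multiplying by a matrix unit `(P, Q)` on the right, `φ(f)` keeps only its term with source `P`,
so `φ(f) φ(g) = ∑ (S, f(g(S)))` over the `S ∈ PCS(g)` with `g(S) ∈ PCS(f)`. Because `f` fixes
`n+1` (it is weakly increasing), these `S` are exactly the partial cross-sections of `fg`.
-/

section PartialCrossSections

variable {n : ℕ} {f g : Fin (n+1) → Fin (n+1)}

theorem mem_PCS_comp_iff (hf : f (Fin.last n) = Fin.last n) {T : Finset (Fin (n+1))} :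
    T ∈ PCS (fun i => f (g i)) ↔ T ∈ PCS g ∧ T.image g ∈ PCS f := by
  have himage : T.image (fun i => f (g i)) = (T.image g).image f := Finset.image_image.symm
  simp only [PCS, Set.mem_ofPred_eq, himage, Finset.coe_image]
  constructor
  · rintro ⟨hT, hfg, hinj⟩
    have hg : Fin.last n ∉ T.image g := fun h => hfg (hf ▸ Finset.mem_image_of_mem f h)
    exact ⟨⟨hT, hg, hinj.of_comp⟩, hg, hfg, hinj.image_of_comp⟩
  · rintro ⟨⟨hT, _, hginj⟩, _, hfg, hfinj⟩
    exact ⟨hT, hfg, hginj.comp_iff.2 hfinj⟩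

theorem imageP_of_last_notMem {P : Pn n} (h : Fin.last n ∉ P.1.image f) :
    imageP f P = ⟨P.1.image f, h⟩ :=
  dif_pos h

theorem imageP_comp {P : Pn n} (hg : Fin.last n ∉ P.1.image g)
    (hfg : Fin.last n ∉ P.1.image (fun i => f (g i))) :
    imageP f (imageP g P) = imageP (fun i => f (g i)) P := by
  have hfg' : Fin.last n ∉ (P.1.image g).image f := by rwa [Finset.image_image]
  rw [imageP_of_last_notMem hg, imageP_of_last_notMem hfg, imageP_of_last_notMem hfg']
  simp only [Finset.image_image, Function.comp_def]

theorem mem_PCS_comp_iff_imageP (hf : f (Fin.last n) = Fin.last n) {P : Pn n} :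
    P.1 ∈ PCS (fun i => f (g i)) ↔ P.1 ∈ PCS g ∧ (imageP g P).1 ∈ PCS f := by
  rw [mem_PCS_comp_iff hf]
  refine and_congr_right fun hP => ?_
  rw [imageP_of_last_notMem hP.2.1]

end PartialCrossSections

section Phi

variable {n : ℕ} {k : Type*} [CommRing k]

open Classical in
theorem phi_mul_single (f : Fin (n+1) → Fin (n+1)) (P Q : Pn n) (c : k) :
    phi n k f * Matrix.single P Q c =
      if P.1 ∈ PCS f then Matrix.single (imageP f P) Q c else 0 := by
  rw [phi, Finset.sum_mul]
  have hterm : ∀ R : Pn n, Matrix.single (imageP f R) R (1 : k) * Matrix.single P Q c =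
      if R = P then Matrix.single (imageP f P) Q c else 0 := by
    intro R
    split_ifs with h
    · rw [h, Matrix.single_mul_single_same, one_mul]
    · exact Matrix.single_mul_single_of_ne (h := h) ..
  simp only [hterm, Finset.sum_ite_eq', Finset.mem_filter, Finset.mem_univ, true_and]

open Classical in
theorem phi_mul_phi (f g : Fin (n+1) → Fin (n+1)) :
    phi n k f * phi n k g =
      ∑ Q ∈ Finset.univ.filter (fun Q : Pn n => Q.1 ∈ PCS g ∧ (imageP g Q).1 ∈ PCS f),
        Matrix.single (imageP f (imageP g Q)) Q 1 := by
  rw [phi.eq_1 n k g, Finset.mul_sum, ← Finset.filter_filter,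
    Finset.sum_filter (fun Q : Pn n => (imageP g Q).1 ∈ PCS f)]
  exact Finset.sum_congr rfl fun Q _ => phi_mul_single f _ Q 1

end Phi

theorem phi_mul_general (n : ℕ) (k : Type*) [CommRing k] (f g : Fin (n+1) → Fin (n+1))
    (hf : Monotone f ∧ ∀ i, i ≤ f i) :
    phi n k f * phi n k g = phi n k (fun i => f (g i)) := by
  classical
  have hlast : f (Fin.last n) = Fin.last n := le_antisymm (Fin.le_last _) (hf.2 _)
  rw [phi_mul_phi, phi]
  refine Finset.sum_congr ?_ fun Q hQ => ?_
  · exact Finset.filter_congr fun Q _ => (mem_PCS_comp_iff_imageP hlast).symm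
  · have hQ : Q.1 ∈ PCS (fun i => f (g i)) := (Finset.mem_filter.1 hQ).2
    rw [imageP_comp ((mem_PCS_comp_iff hlast).1 hQ).1.2.1 hQ.2.1]

/-- The map `φ(f) = ∑_{S ∈ PCS(f)} (S, f(S))` is multiplicative on basis elements:
for `f, g ∈ C_{n+1}`, `φ(f) · φ(g) = φ(fg)` in `I(Pₙ, k)`, where `fg : i ↦ f(g(i))`. -/
theorem phi_mul (n : ℕ) (k : Type*) [CommRing k] (f g : Fin (n+1) → Fin (n+1))
    (hf : Monotone f ∧ ∀ i, i ≤ f i) (hg : Monotone g ∧ ∀ i, i ≤ g i) :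
    phi n k f * phi n k g = phi n k (fun i => f (g i)) :=
  phi_mul_general n k f g hf
end

section
/- For any commutative ring k with unit and any n ≥ 1, the monoid algebra kC_n of the Catalan monoid C_n over k is isomorphic as a k-algebra to the incidence algebra I(P_{n-1}, k) of the poset P_{n-1} over k. -/
/-!
For `n = m + 1`, an element `f` of `Cₙ` acts on the free `k`-module on `Pₘ` by sending `X` to
`f(X)` when `f` is injective on `X` and `f(X)` avoids the top element, and to `0` otherwise.
Since `f` fixes the top element this is multiplicative, and since `f` is monotone and
increasing the matrix of `f` lies in `I(Pₘ, k)`; so we get an algebra map `kCₙ → I(Pₘ, k)`.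

An element `f` is determined by the set `X_f` of its non-top fibre maxima together with
`f(X_f)`, and every interval `X ≤ Y` of `Pₘ` arises as `(X_f, f(X_f))`; this identifies `Cₙ`
with the intervals of `Pₘ`, i.e. with the basis of `I(Pₘ, k)`. In these bases the algebra map
is unitriangular: if `f` maps `X` bijectively onto some `Y ∈ Pₘ`, then either
`(X, Y) = (X_f, f(X_f))` or `(|X|, ∑ X)` is lexicographically smaller than `(|X_f|, ∑ X_f)`,
because `x ↦ max f⁻¹(f x)` maps `X` injectively and upwards into `X_f`. Hence its determinant
is `1` and it is an isomorphism.
-/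

open Finset Module

theorem Matrix.det_eq_one_of_unitriangular {ι R α : Type*} [Fintype ι] [DecidableEq ι]
    [CommRing R] [LinearOrder α] {M : Matrix ι ι R} (b : ι → α) (hdiag : ∀ i, M i i = 1)
    (hlt : ∀ i j, i ≠ j → M i j ≠ 0 → b i < b j) : M.det = 1 := by
  have hM : M.BlockTriangular b := fun i j hji => by
    by_contra hij
    exact (hlt i j (ne_of_apply_ne b hji.ne') hij).not_gt hji
  have hblock : ∀ a, M.toSquareBlock b a = 1 := fun a => by
    ext ⟨i, hi⟩ ⟨j, hj⟩
    rw [Matrix.toSquareBlock_def, Matrix.of_apply, Matrix.one_apply]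
    split_ifs with hij
    · cases hij; exact hdiag i
    · by_contra hne
      exact (hlt i j (fun h => hij (Subtype.ext h)) hne).ne (hi.trans hj.symm)
  simp [hM.det, hblock]

theorem LinearMap.bijective_of_unitriangular {ι R M N α : Type*} [Fintype ι] [DecidableEq ι]
    [CommRing R] [AddCommGroup M] [Module R M] [AddCommGroup N] [Module R N] [LinearOrder α]
    (v : Basis ι R M) (w : Basis ι R N) (f : M →ₗ[R] N) (b : ι → α)
    (hdiag : ∀ i, w.repr (f (v i)) i = 1)
    (hlt : ∀ i j, i ≠ j → w.repr (f (v j)) i ≠ 0 → b i < b j) : Function.Bijective f := by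
  have hdet : (toMatrix v w f).det = 1 := by
    refine Matrix.det_eq_one_of_unitriangular b (fun i => ?_) (fun i j hij => ?_)
    · rw [toMatrix_apply, hdiag]
    · rw [toMatrix_apply]; exact hlt i j hij
  exact (LinearEquiv.ofIsUnitDet (hdet ▸ isUnit_one)).bijective

theorem StrictMonoOn.sort_image {α β : Type*} [LinearOrder α] [LinearOrder β] {f : α → β}
    {s : Finset α} (hf : StrictMonoOn f s) : (s.image f).sort = s.sort.map f := by
  refine List.Perm.eq_of_sortedLE (sortedLT_sort _).sortedLE ?_ ?_
  · exact List.sortedLE_iff_pairwise.2 <| List.pairwise_map.2 <|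
      (List.sortedLE_iff_pairwise.1 (sortedLT_sort s).sortedLE).imp_of_mem
        fun ha hb hab => hf.monotoneOn (mem_sort _ |>.1 ha) (mem_sort _ |>.1 hb) hab
  · rw [← Multiset.coe_eq_coe, ← Multiset.map_coe, sort_eq, sort_eq, image_val_of_injOn hf.injOn]

theorem ple_image {α : Type*} [LinearOrder α] {f : α → α} {s : Finset α}
    (hf : StrictMonoOn f s) (hle : ∀ a ∈ s, a ≤ f a) : Ple s (s.image f) := by
  rw [Ple, hf.sort_image, List.forall₂_map_right_iff]
  exact List.forall₂_same.2 fun a ha => hle a ((mem_sort _).1 ha)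

theorem Ple.card_eq {α : Type*} [LinearOrder α] {X Y : Finset α} (h : Ple X Y) :
    #X = #Y := by
  simpa using h.length_eq

section FiberMax

variable {α β : Type*} [LinearOrder α] [Fintype α] [DecidableEq β] (f : α → β)

def fiberMax (a : α) : α := (univ.filter (f · = f a)).max' ⟨a, by simp⟩

theorem le_fiberMax_of_apply_eq {a b : α} (h : f b = f a) : b ≤ fiberMax f a :=
  le_max' _ _ (by simpa using h)

theorem le_fiberMax (a : α) : a ≤ fiberMax f a := le_fiberMax_of_apply_eq f rfl

theorem apply_fiberMax (a : α) : f (fiberMax f a) = f a :=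
  (mem_filter.1 (max'_mem (univ.filter (f · = f a)) _)).2

theorem fiberMax_fiberMax (a : α) : fiberMax f (fiberMax f a) = fiberMax f a :=
  le_antisymm (le_fiberMax_of_apply_eq f ((apply_fiberMax f _).trans (apply_fiberMax f a)))
    (le_fiberMax f _)

end FiberMax

theorem Finset.bijOn_coe_iff {α β : Type*} [DecidableEq β] {f : α → β} {X : Finset α}
    {Y : Finset β} : Set.BijOn f X Y ↔ Set.InjOn f X ∧ X.image f = Y := by
  rw [← coe_inj, coe_image]
  exact ⟨fun h => ⟨h.injOn, h.image_eq⟩, fun ⟨hinj, himg⟩ => himg ▸ hinj.bijOn_image⟩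

theorem sum_val_lt_of_injOn {n : ℕ} {s t : Finset (Fin n)} {g : Fin n → Fin n}
    (hmaps : ∀ a ∈ s, g a ∈ t) (hinj : Set.InjOn g s) (hcard : #t ≤ #s)
    (hle : ∀ a ∈ s, a ≤ g a) (hne : s ≠ t) : ∑ a ∈ s, (a : ℕ) < ∑ a ∈ t, (a : ℕ) := by
  have himg : s.image g = t := eq_of_subset_of_card_le (image_subset_iff.2 hmaps)
    (by rwa [card_image_of_injOn hinj])
  rw [← himg, sum_image hinj]
  refine sum_lt_sum (fun a ha => hle a ha) ?_
  by_contra! hfix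
  have hid : s.image g = s :=
    (image_congr fun a ha => ((hle a ha).antisymm (hfix a ha)).symm).trans image_id
  exact hne (hid.symm.trans himg)

instance {α : Type*} [LinearOrder α] : DecidableRel (Ple : Finset α → Finset α → Prop) :=
  fun _ _ => inferInstanceAs (Decidable (List.Forall₂ _ _ _))

abbrev PnInterval (m : ℕ) := {p : Pn m × Pn m // Ple p.1.1 p.2.1}

theorem PnInterval.ext {m : ℕ} {p q : PnInterval m} (h₁ : p.1.1.1 = q.1.1.1)
    (h₂ : p.1.2.1 = q.1.2.1) : p = q :=
  Subtype.ext (Prod.ext (Subtype.ext h₁) (Subtype.ext h₂))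

noncomputable def IncAlg.equivFun (m : ℕ) (k : Type*) [CommRing k] :
    IncAlg m k ≃ₗ[k] (PnInterval m → k) where
  toFun M p := M.1 p.1.2 p.1.1
  invFun c := ⟨fun Y X => if h : Ple X.1 Y.1 then c ⟨(X, Y), h⟩ else 0, fun _ _ h => dif_neg h⟩
  map_add' _ _ := rfl
  map_smul' _ _ := rfl
  left_inv M := Subtype.ext <| funext₂ fun Y X => by
    by_cases h : Ple X.1 Y.1
    · exact dif_pos h
    · exact (dif_neg h).trans (M.2 X Y h).symm
  right_inv c := funext fun p => dif_pos p.2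

noncomputable def IncAlg.basis (m : ℕ) (k : Type*) [CommRing k] :
    Basis (PnInterval m) k (IncAlg m k) :=
  .ofEquivFun (IncAlg.equivFun m k)

theorem IncAlg.basis_repr_apply {m : ℕ} {k : Type*} [CommRing k] (M : IncAlg m k)
    (p : PnInterval m) : (IncAlg.basis m k).repr M p = M.1 p.1.2 p.1.1 :=
  Basis.ofEquivFun_repr_apply ..

namespace Catalan

variable {m : ℕ}

def sortTop (X : Finset (Fin (m+1))) : List (Fin (m+1)) := X.sort ++ [Fin.last m]

theorem length_sortTop (X : Finset (Fin (m+1))) : (sortTop X).length = #X + 1 := by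
  simp [sortTop]

theorem mem_sortTop {X : Finset (Fin (m+1))} {a : Fin (m+1)} :
    a ∈ sortTop X ↔ a ∈ X ∨ a = Fin.last m := by
  simp [sortTop]

theorem sortedLT_sortTop {X : Finset (Fin (m+1))} (hX : Fin.last m ∉ X) :
    (sortTop X).SortedLT := by
  refine List.sortedLT_iff_pairwise.2 (List.pairwise_append.2
    ⟨List.sortedLT_iff_pairwise.1 (sortedLT_sort X), List.pairwise_singleton _ _, ?_⟩)
  intro a ha b hb
  rw [List.mem_singleton.1 hb]
  exact (Fin.le_last a).lt_of_ne fun h => hX (h ▸ (mem_sort _).1 ha)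

theorem getElem_sortTop_of_lt {X : Finset (Fin (m+1))} {t : ℕ} (ht : t < #X) :
    (sortTop X)[t]'(by rw [length_sortTop]; omega) = X.sort[t]'(by simpa using ht) :=
  List.getElem_append_left _

theorem _root_.Ple.forall₂_sortTop {X Y : Finset (Fin (m+1))} (h : Ple X Y) :
    List.Forall₂ (· ≤ ·) (sortTop X) (sortTop Y) :=
  List.rel_append h (.cons le_rfl .nil)

theorem _root_.Ple.length_sortTop_eq {X Y : Finset (Fin (m+1))} (h : Ple X Y) :
    (sortTop X).length = (sortTop Y).length :=
  h.forall₂_sortTop.length_eq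

def ceilIdx (X : Finset (Fin (m+1))) (i : Fin (m+1)) : ℕ :=
  (sortTop X).findIdx (i ≤ ·)

theorem ceilIdx_lt_length (X : Finset (Fin (m+1))) (i : Fin (m+1)) :
    ceilIdx X i < (sortTop X).length :=
  List.findIdx_lt_length_of_exists ⟨_, mem_sortTop.2 (.inr rfl), by simp [Fin.le_last]⟩

theorem le_getElem_ceilIdx (X : Finset (Fin (m+1))) (i : Fin (m+1)) :
    i ≤ (sortTop X)[ceilIdx X i]'(ceilIdx_lt_length X i) :=
  of_decide_eq_true (List.findIdx_getElem (w := ceilIdx_lt_length X i))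

theorem ceilIdx_le_iff {X : Finset (Fin (m+1))} (hX : Fin.last m ∉ X) {i : Fin (m+1)} {t : ℕ}
    (ht : t < (sortTop X).length) : ceilIdx X i ≤ t ↔ i ≤ (sortTop X)[t] := by
  refine ⟨fun h => (le_getElem_ceilIdx X i).trans ?_, fun h => ?_⟩
  · exact ((sortedLT_sortTop hX).getElem_le_getElem_iff).2 h
  · by_contra! hlt
    simpa [h] using List.not_of_lt_findIdx hlt

theorem ceilIdx_getElem {X : Finset (Fin (m+1))} (hX : Fin.last m ∉ X) {t : ℕ}
    (ht : t < (sortTop X).length) : ceilIdx X (sortTop X)[t] = t := by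
  refine le_antisymm ((ceilIdx_le_iff hX ht).2 le_rfl) ?_
  exact ((sortedLT_sortTop hX).getElem_le_getElem_iff).1 (le_getElem_ceilIdx X _)

/-- Writing `X ∪ {last} = {x₀ < ⋯ < x_k}` and `Y ∪ {last} = {y₀ < ⋯ < y_k}`, this sends `i`
to `y_j` for the least `j` with `i ≤ x_j`; it is the element of `Cₘ₊₁` whose non-top fibre
maxima are `X`, with image `Y ∪ {last}`. -/
def intervalMap (X Y : Finset (Fin (m+1))) (i : Fin (m+1)) : Fin (m+1) :=
  (sortTop Y).getD (ceilIdx X i) (Fin.last m)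

theorem intervalMap_eq_getElem {X Y : Finset (Fin (m+1))} (h : Ple X Y) (i : Fin (m+1)) :
    intervalMap X Y i =
      (sortTop Y)[ceilIdx X i]'(h.length_sortTop_eq ▸ ceilIdx_lt_length X i) :=
  List.getD_eq_getElem ..

theorem intervalMap_getElem {X Y : Finset (Fin (m+1))} (hX : Fin.last m ∉ X) (h : Ple X Y)
    {t : ℕ} (ht : t < (sortTop X).length) :
    intervalMap X Y (sortTop X)[t] = (sortTop Y)[t]'(h.length_sortTop_eq ▸ ht) := by
  simp only [intervalMap_eq_getElem h, ceilIdx_getElem hX ht]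

theorem monotone_intervalMap {X Y : Finset (Fin (m+1))} (hX : Fin.last m ∉ X)
    (hY : Fin.last m ∉ Y) (h : Ple X Y) : Monotone (intervalMap X Y) := by
  intro i j hij
  simp only [intervalMap_eq_getElem h, (sortedLT_sortTop hY).getElem_le_getElem_iff]
  exact (ceilIdx_le_iff hX _).2 (hij.trans (le_getElem_ceilIdx X j))

theorem le_intervalMap {X Y : Finset (Fin (m+1))} (h : Ple X Y) (i : Fin (m+1)) :
    i ≤ intervalMap X Y i := by
  rw [intervalMap_eq_getElem h]
  exact (le_getElem_ceilIdx X i).trans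
    ((List.forall₂_iff_get.1 h.forall₂_sortTop).2 _ (ceilIdx_lt_length X i) _)

theorem map_intervalMap_sort {X Y : Finset (Fin (m+1))} (hX : Fin.last m ∉ X) (h : Ple X Y) :
    X.sort.map (intervalMap X Y) = Y.sort := by
  refine List.ext_getElem (by simp [h.card_eq]) fun t ht _ => ?_
  have htX : t < #X := by simpa using ht
  rw [List.getElem_map, ← getElem_sortTop_of_lt htX, intervalMap_getElem hX h,
    getElem_sortTop_of_lt (h.card_eq ▸ htX)]

theorem image_intervalMap {X Y : Finset (Fin (m+1))} (hX : Fin.last m ∉ X) (h : Ple X Y) :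
    X.image (intervalMap X Y) = Y := by
  ext y
  rw [mem_image, ← mem_sort (· ≤ ·), ← map_intervalMap_sort hX h, List.mem_map]
  simp only [mem_sort]

theorem intervalMap_eq_iff {X Y : Finset (Fin (m+1))} (hY : Fin.last m ∉ Y) (h : Ple X Y)
    {i j : Fin (m+1)} : intervalMap X Y i = intervalMap X Y j ↔ ceilIdx X i = ceilIdx X j := by
  rw [intervalMap_eq_getElem h, intervalMap_eq_getElem h,
    (sortedLT_sortTop hY).nodup.getElem_inj_iff]

variable {f : Fin (m+1) → Fin (m+1)}

def fiberMaxima (f : Fin (m+1) → Fin (m+1)) : Finset (Fin (m+1)) :=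
  univ.filter fun i => i ≠ Fin.last m ∧ fiberMax f i = i

def weight {n : ℕ} (X : Finset (Fin n)) : ℕ ×ₗ ℕ := toLex (#X, ∑ x ∈ X, (x : ℕ))

theorem apply_last (hle : ∀ i, i ≤ f i) : f (Fin.last m) = Fin.last m :=
  (Fin.le_last _).antisymm (hle _)

theorem last_notMem_fiberMaxima : Fin.last m ∉ fiberMaxima f := by
  simp [fiberMaxima]

theorem fiberMax_mem_sortTop (i : Fin (m+1)) : fiberMax f i ∈ sortTop (fiberMaxima f) := by
  rw [mem_sortTop, fiberMaxima, mem_filter]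
  by_cases h : fiberMax f i = Fin.last m
  · exact .inr h
  · exact .inl ⟨mem_univ _, h, fiberMax_fiberMax f i⟩

theorem fiberMax_mem_fiberMaxima (hle : ∀ i, i ≤ f i) {i : Fin (m+1)}
    (hi : f i ≠ Fin.last m) : fiberMax f i ∈ fiberMaxima f := by
  refine (mem_sortTop.1 (fiberMax_mem_sortTop i)).resolve_right fun h => hi ?_
  rw [← apply_fiberMax f i, h, apply_last hle]

theorem injOn_fiberMaxima : Set.InjOn f (fiberMaxima f) := by
  intro a ha b hb hab
  have ha' := (mem_filter.1 ha).2.2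
  have hb' := (mem_filter.1 hb).2.2
  exact ((le_fiberMax_of_apply_eq f hab).trans_eq hb').antisymm
    ((le_fiberMax_of_apply_eq f hab.symm).trans_eq ha')

theorem last_notMem_image_fiberMaxima (hle : ∀ i, i ≤ f i) :
    Fin.last m ∉ (fiberMaxima f).image f := by
  rw [mem_image]
  rintro ⟨x, hx, hfx⟩
  have hx' := (mem_filter.1 hx).2
  exact hx'.1 ((Fin.le_last _).antisymm
    ((le_fiberMax_of_apply_eq f ((apply_last hle).trans hfx.symm)).trans_eq hx'.2))

theorem strictMonoOn_fiberMaxima (hmono : Monotone f) : StrictMonoOn f (fiberMaxima f) :=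
  hmono.monotoneOn _ |>.strictMonoOn_of_injOn injOn_fiberMaxima

theorem ple_image_fiberMaxima (hmono : Monotone f) (hle : ∀ i, i ≤ f i) :
    Ple (fiberMaxima f) ((fiberMaxima f).image f) :=
  ple_image (strictMonoOn_fiberMaxima hmono) fun a _ => hle a

theorem subset_image_fiberMaxima (hle : ∀ i, i ≤ f i) {X Y : Finset (Fin (m+1))}
    (hY : Fin.last m ∉ Y) (h : X.image f = Y) : Y ⊆ (fiberMaxima f).image f := by
  intro y hy
  obtain ⟨x, -, rfl⟩ := mem_image.1 (h ▸ hy)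
  exact mem_image.2 ⟨_, fiberMax_mem_fiberMaxima hle fun h' => hY (h' ▸ hy),
    apply_fiberMax f x⟩

theorem weight_lt_of_bijOn (hle : ∀ i, i ≤ f i) {X Y : Finset (Fin (m+1))}
    (hY : Fin.last m ∉ Y) (h : Set.BijOn f X Y)
    (hne : (X, Y) ≠ (fiberMaxima f, (fiberMaxima f).image f)) :
    weight X < weight (fiberMaxima f) := by
  obtain ⟨hinj, himg⟩ := bijOn_coe_iff.1 h
  have hsub := subset_image_fiberMaxima hle hY himg
  have hcard : #X ≤ #(fiberMaxima f) := by
    rw [← card_image_of_injOn hinj, himg, ← card_image_of_injOn (injOn_fiberMaxima (f := f))]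
    exact card_le_card hsub
  rw [weight, weight, Prod.Lex.toLex_lt_toLex]
  obtain hlt | heq := hcard.lt_or_eq
  · exact .inl hlt
  refine .inr ⟨heq, sum_val_lt_of_injOn (g := fiberMax f) (fun a ha => ?_) ?_ heq.ge ?_ ?_⟩
  · exact fiberMax_mem_fiberMaxima hle fun h => hY (h ▸ himg ▸ mem_image_of_mem f ha)
  · exact fun a ha b hb hab => hinj ha hb (by rw [← apply_fiberMax f a, hab, apply_fiberMax f b])
  · exact fun a _ => le_fiberMax f a
  · rintro rfl
    exact hne (by rw [himg])

theorem fiberMaxima_intervalMap {X Y : Finset (Fin (m+1))} (hX : Fin.last m ∉ X)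
    (hY : Fin.last m ∉ Y) (h : Ple X Y) : fiberMaxima (intervalMap X Y) = X := by
  ext i
  simp only [fiberMaxima, mem_filter, mem_univ, true_and]
  constructor
  · rintro ⟨hi, hmax⟩
    have hc := ceilIdx_lt_length X i
    have hci : (sortTop X)[ceilIdx X i] = i := by
      refine le_antisymm ?_ (le_getElem_ceilIdx X i)
      calc (sortTop X)[ceilIdx X i] ≤ fiberMax (intervalMap X Y) i :=
            le_fiberMax_of_apply_eq _ ((intervalMap_eq_iff hY h).2 (ceilIdx_getElem hX hc))
        _ = i := hmax
    exact (mem_sortTop.1 (hci ▸ List.getElem_mem hc)).resolve_right hi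
  · intro hi
    refine ⟨fun h' => hX (h' ▸ hi), le_antisymm ?_ (le_fiberMax _ i)⟩
    obtain ⟨t, ht, rfl⟩ := List.getElem_of_mem (mem_sortTop.2 (.inl hi))
    rw [← ceilIdx_le_iff hX ht, (intervalMap_eq_iff hY h).1 (apply_fiberMax _ _),
      ceilIdx_getElem hX ht]

theorem sortTop_image_fiberMaxima (hmono : Monotone f) (hle : ∀ i, i ≤ f i) :
    sortTop ((fiberMaxima f).image f) = (sortTop (fiberMaxima f)).map f := by
  rw [sortTop, sortTop, List.map_append, (strictMonoOn_fiberMaxima hmono).sort_image,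
    List.map_singleton, apply_last hle]

theorem intervalMap_fiberMaxima (hmono : Monotone f) (hle : ∀ i, i ≤ f i) :
    intervalMap (fiberMaxima f) ((fiberMaxima f).image f) = f := by
  funext i
  have hX : Fin.last m ∉ fiberMaxima f := last_notMem_fiberMaxima
  rw [intervalMap_eq_getElem (ple_image_fiberMaxima hmono hle),
    List.getElem_of_eq (sortTop_image_fiberMaxima hmono hle), List.getElem_map]
  obtain ⟨t, ht, hmax⟩ := List.getElem_of_mem (fiberMax_mem_sortTop (f := f) i)
  have hc : (sortTop (fiberMaxima f))[ceilIdx (fiberMaxima f) i]'(ceilIdx_lt_length _ i) ≤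
      fiberMax f i := by
    rw [← hmax, (sortedLT_sortTop hX).getElem_le_getElem_iff, ceilIdx_le_iff hX ht, hmax]
    exact le_fiberMax f i
  exact le_antisymm ((hmono hc).trans_eq (apply_fiberMax f i))
    (hmono (le_getElem_ceilIdx _ i))

def toInterval (f : catalanMonoid (m+1)) : PnInterval m :=
  ⟨(⟨fiberMaxima f.1, last_notMem_fiberMaxima⟩,
    ⟨(fiberMaxima f.1).image f.1, last_notMem_image_fiberMaxima f.2.2⟩),
    ple_image_fiberMaxima f.2.1 f.2.2⟩

def ofInterval (p : PnInterval m) : catalanMonoid (m+1) :=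
  ⟨intervalMap p.1.1.1 p.1.2.1, monotone_intervalMap p.1.1.2 p.1.2.2 p.2, le_intervalMap p.2⟩

def intervalEquiv : catalanMonoid (m+1) ≃ PnInterval m where
  toFun := toInterval
  invFun := ofInterval
  left_inv f := Subtype.ext (intervalMap_fiberMaxima f.2.1 f.2.2)
  right_inv p := by
    have hX := fiberMaxima_intervalMap p.1.1.2 p.1.2.2 p.2
    refine PnInterval.ext hX ?_
    show (fiberMaxima (intervalMap _ _)).image (intervalMap _ _) = _
    rw [hX, image_intervalMap p.1.1.2 p.2]

end Catalan

namespace Catalan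

variable {m : ℕ} (k : Type*) [CommRing k]

def rep (f : Fin (m+1) → Fin (m+1)) : Matrix (Pn m) (Pn m) k :=
  fun Y X => if Set.BijOn f X.1 Y.1 then 1 else 0

theorem rep_apply (f : Fin (m+1) → Fin (m+1)) (Y X : Pn m) :
    rep k f Y X = if Set.BijOn f X.1 Y.1 then 1 else 0 :=
  rfl

theorem rep_mem {f : Fin (m+1) → Fin (m+1)} (hmono : Monotone f) (hle : ∀ i, i ≤ f i) :
    rep k f ∈ IncAlg m k := by
  intro X Y hXY
  rw [rep_apply, if_neg]
  intro h
  obtain ⟨hinj, himg⟩ := bijOn_coe_iff.1 h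
  exact hXY (himg ▸ ple_image (hmono.monotoneOn _ |>.strictMonoOn_of_injOn hinj) fun a _ => hle a)

theorem rep_id : rep k (id : Fin (m+1) → Fin (m+1)) = 1 := by
  ext Y X
  simp only [rep_apply, Matrix.one_apply, bijOn_coe_iff, Set.injOn_id, image_id, true_and]
  exact if_congr (Subtype.ext_iff.symm.trans eq_comm) rfl rfl

theorem rep_comp {f : Fin (m+1) → Fin (m+1)} (hle : ∀ i, i ≤ f i) (g : Fin (m+1) → Fin (m+1)) :
    rep k (f ∘ g) = rep k f * rep k g := by
  ext Y X
  rw [Matrix.mul_apply]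
  by_cases hg : Set.InjOn g X.1 ∧ Fin.last m ∉ X.1.image g
  · let Z : Pn m := ⟨X.1.image g, hg.2⟩
    have hgZ : rep k g Z X = 1 := if_pos (bijOn_coe_iff.2 ⟨hg.1, rfl⟩)
    rw [sum_eq_single Z, hgZ, mul_one, rep_apply, rep_apply]
    · refine if_congr ?_ rfl rfl
      show _ ↔ Set.BijOn f ↑(X.1.image g) ↑Y.1
      rw [coe_image, Set.bijOn_comp_iff hg.1]
    · intro Z' _ hZ'
      rw [rep_apply k g, if_neg, mul_zero]
      exact fun h => hZ' (Subtype.ext (bijOn_coe_iff.1 h).2.symm)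
    · exact fun h => (h (mem_univ Z)).elim
  · rw [sum_eq_zero, rep_apply, if_neg]
    · intro h
      refine hg ⟨h.injOn.of_comp, fun hlast => Y.2 ?_⟩
      obtain ⟨x, hx, hgx⟩ := mem_image.1 hlast
      have hfgx := h.mapsTo hx
      rwa [Function.comp_apply, hgx, apply_last hle] at hfgx
    · intro Z _
      rw [rep_apply k g, if_neg, mul_zero]
      intro h
      obtain ⟨hinj, himg⟩ := bijOn_coe_iff.1 h
      exact hg ⟨hinj, himg ▸ Z.2⟩

noncomputable def repHom : catalanMonoid (m+1) →* IncAlg m k where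
  toFun f := ⟨rep k f.1, rep_mem k f.2.1 f.2.2⟩
  map_one' := Subtype.ext (rep_id k)
  map_mul' f g := Subtype.ext (rep_comp k f.2.2 g.1)

theorem rep_toInterval (f : catalanMonoid (m+1)) :
    rep k f.1 (toInterval f).1.2 (toInterval f).1.1 = 1 :=
  if_pos (bijOn_coe_iff.2 ⟨injOn_fiberMaxima, rfl⟩)

theorem weight_lt_of_rep_ne_zero (f : catalanMonoid (m+1)) {q : PnInterval m}
    (hq : q ≠ toInterval f) (h : rep k f.1 q.1.2 q.1.1 ≠ 0) :
    weight q.1.1.1 < weight (toInterval f).1.1.1 := by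
  refine weight_lt_of_bijOn f.2.2 q.1.2.2 (of_not_not fun hbij => h (if_neg hbij)) ?_
  intro hq'
  exact hq (PnInterval.ext (congrArg Prod.fst hq') (congrArg Prod.snd hq'))

theorem bijective_lift_repHom :
    Function.Bijective (MonoidAlgebra.lift k (IncAlg m k) (catalanMonoid (m+1)) (repHom k)) := by
  have hentry (f : catalanMonoid (m+1)) (q : PnInterval m) :
      (IncAlg.basis m k).repr (MonoidAlgebra.lift k (IncAlg m k) _ (repHom k)
        ((MonoidAlgebra.basis _ k).reindex intervalEquiv (intervalEquiv f))) q =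
        rep k f.1 q.1.2 q.1.1 := by
    simp [IncAlg.basis_repr_apply, MonoidAlgebra.lift_single, repHom]
  refine LinearMap.bijective_of_unitriangular ((MonoidAlgebra.basis _ k).reindex intervalEquiv)
    (IncAlg.basis m k) (MonoidAlgebra.lift k (IncAlg m k) _ (repHom k)).toLinearMap
    (fun q => weight q.1.1.1) (fun p => ?_) (fun q p hqp hne => ?_)
  · obtain ⟨f, rfl⟩ := intervalEquiv.surjective p
    exact (hentry f _).trans (rep_toInterval k f)
  · obtain ⟨f, rfl⟩ := intervalEquiv.surjective p
    exact weight_lt_of_rep_ne_zero k f hqp ((hentry f q).symm.trans_ne hne)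

end Catalan

/-- For any commutative ring `k` and `n ≥ 1`, the monoid algebra `kCₙ` of the Catalan
monoid over `k` is isomorphic as a `k`-algebra to the incidence algebra
`I(P_{n-1}, k)`. -/
theorem catalan_monoidAlgebra_iso_incidence (n : ℕ) (hn : 1 ≤ n)
    (k : Type*) [CommRing k] :
    Nonempty (MonoidAlgebra k (catalanMonoid n) ≃ₐ[k] IncAlg (n-1) k) := by
  obtain ⟨m, rfl⟩ : ∃ m, n = m + 1 := ⟨n - 1, by omega⟩
  exact ⟨AlgEquiv.ofBijective _ (Catalan.bijective_lift_repHom k)⟩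
end

section
/- The number of ordered pairs (X,Y) of subsets of [n] with X ≤ Y in P_n (i.e., |X| = |Y| and, writing X = {x_1 < ⋯ < x_k}, Y = {y_1 < ⋯ < y_k}, x_i ≤ y_i for all i) equals the (n+1)-st Catalan number. -/
/-!
Record a pair `(X, Y)` by its membership sequence `((j ∈ X, j ∈ Y))_j`. Comparing the sorted
enumerations entrywise amounts to counting: `X ≤ Y` iff `|X| = |Y|` and every initial segment of
`[n]` contains at least as many elements of `X` as of `Y`, i.e. the membership sequence is a
ballot sequence. Spelling each entry as two Dyck steps turns ballot sequences of length `n` into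
the words of length `2 n` with total excess `0` whose prefixes have excess at least `-1`, and
enclosing these between `U` and `D` gives exactly the Dyck words of semilength `n + 1`.
-/

open List DyckStep
open scoped Finset

section LinearOrder

variable {α : Type*} [LinearOrder α]

theorem List.Forall₂.countP_lt_le {l₁ l₂ : List α} (h : Forall₂ (· ≤ ·) l₁ l₂) (a : α) :
    l₂.countP (· < a) ≤ l₁.countP (· < a) := by
  induction h with
  | nil => simp
  | @cons x y _ _ hxy _ ih =>
    by_cases hy : y < a
    · simp [hy, hxy.trans_lt hy, ih]
    · simp only [countP_cons, hy]
      grind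

theorem List.forall₂_le_of_countP_lt_le {l₁ l₂ : List α} (h₁ : l₁.Pairwise (· < ·))
    (h₂ : l₂.Pairwise (· < ·)) (hlen : l₁.length = l₂.length)
    (hcount : ∀ a, l₂.countP (· < a) ≤ l₁.countP (· < a)) : Forall₂ (· ≤ ·) l₁ l₂ := by
  induction l₁ generalizing l₂ with
  | nil => simp_all [eq_comm (a := 0)]
  | cons x xs ih =>
    obtain _ | ⟨y, ys⟩ := l₂
    · simp at hlen
    rw [pairwise_cons] at h₁ h₂
    have hxy : x ≤ y := by
      by_contra! hyx
      have hxs : xs.countP (· < x) = 0 := countP_eq_zero.2 fun b hb => by simpa using (h₁.1 b hb).le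
      simpa [hyx, hxs] using hcount x
    refine .cons hxy (ih h₁.2 h₂.2 (by simpa using hlen) fun a => ?_)
    by_cases hya : y < a
    · simpa [countP_cons, hya, hxy.trans_lt hya] using hcount a
    · rw [countP_eq_zero.2 fun b hb => by simpa using ((not_lt.1 hya).trans_lt (h₂.1 b hb)).le]
      exact Nat.zero_le _

theorem List.forall₂_le_iff_countP_lt_le {l₁ l₂ : List α} (h₁ : l₁.Pairwise (· < ·))
    (h₂ : l₂.Pairwise (· < ·)) :
    Forall₂ (· ≤ ·) l₁ l₂ ↔ l₁.length = l₂.length ∧ ∀ a, l₂.countP (· < a) ≤ l₁.countP (· < a) :=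
  ⟨fun h => ⟨h.length_eq, h.countP_lt_le⟩,
    fun ⟨hlen, hcount⟩ => forall₂_le_of_countP_lt_le h₁ h₂ hlen hcount⟩

theorem ple_iff_card_filter_lt_le (X Y : Finset α) :
    Ple X Y ↔ #X = #Y ∧ ∀ a, #{y ∈ Y | y < a} ≤ #{x ∈ X | x < a} := by
  have hcount (Z : Finset α) (a : α) : (Z.sort (· ≤ ·)).countP (· < a) = #{z ∈ Z | z < a} := by
    rw [← (Z.sort_nodup _).card_eq_countP, Finset.sort_toFinset]
  simp only [Ple, forall₂_le_iff_countP_lt_le X.sortedLT_sort.pairwise Y.sortedLT_sort.pairwise,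
    Finset.length_sort, hcount]

end LinearOrder

def IsBallot (l : List (Bool × Bool)) : Prop :=
  l.countP (·.2) = l.countP (·.1) ∧ ∀ t, (l.take t).countP (·.2) ≤ (l.take t).countP (·.1)

theorem List.countP_take_ofFn {β : Type*} {n : ℕ} (f : Fin n → β) (p : β → Bool) (t : ℕ) :
    ((ofFn f).take t).countP p = #{j : Fin n | j.val < t ∧ p (f j)} := by
  induction n generalizing t with
  | zero => simp
  | succ n ih =>
    cases t with
    | zero => simp
    | succ t =>
      rw [ofFn_succ, take_succ_cons, countP_cons, ih, Finset.card_filter, Finset.card_filter,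
        Fin.sum_univ_succ]
      simp [add_comm]

section Memberships

variable {n : ℕ}

def memberships (X Y : Finset (Fin n)) : List (Bool × Bool) :=
  ofFn fun j => (decide (j ∈ X), decide (j ∈ Y))

@[simp]
theorem length_memberships (X Y : Finset (Fin n)) : (memberships X Y).length = n :=
  length_ofFn

theorem memberships_inj {X Y X' Y' : Finset (Fin n)} :
    memberships X Y = memberships X' Y' ↔ X = X' ∧ Y = Y' := by
  refine ⟨fun h => ?_, by rintro ⟨rfl, rfl⟩; rfl⟩
  have hj := congrFun (ofFn_injective h)
  simp only [Prod.mk.injEq, decide_eq_decide] at hj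
  exact ⟨Finset.ext fun j => (hj j).1, Finset.ext fun j => (hj j).2⟩

theorem exists_memberships_eq {l : List (Bool × Bool)} (hl : l.length = n) :
    ∃ X Y : Finset (Fin n), memberships X Y = l := by
  subst hl
  exact ⟨({j | (l.get j).1} : Finset _), ({j | (l.get j).2} : Finset _), by simp [memberships]⟩

theorem countP_take_memberships (X Y : Finset (Fin n)) (t : ℕ) :
    ((memberships X Y).take t).countP (·.1) = #{x ∈ X | x.val < t} ∧
      ((memberships X Y).take t).countP (·.2) = #{y ∈ Y | y.val < t} := by
  simp only [memberships, countP_take_ofFn, decide_eq_true_eq]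
  constructor <;> congr 1 <;> ext <;> simp [and_comm]

theorem ple_iff_isBallot_memberships (X Y : Finset (Fin n)) :
    Ple X Y ↔ IsBallot (memberships X Y) := by
  have hfull (Z : Finset (Fin n)) {t : ℕ} (ht : n ≤ t) : #{z ∈ Z | z.val < t} = #Z := by
    rw [Finset.filter_true_of_mem fun z _ => z.isLt.trans_le ht]
  have htotal := countP_take_memberships X Y n
  rw [take_of_length_le (length_memberships X Y).le, hfull X le_rfl, hfull Y le_rfl] at htotal
  rw [ple_iff_card_filter_lt_le, IsBallot, htotal.1, htotal.2, eq_comm (a := #Y)]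
  refine and_congr_right fun hcard => ⟨fun h t => ?_, fun h a => ?_⟩
  · rw [(countP_take_memberships X Y t).1, (countP_take_memberships X Y t).2]
    rcases lt_or_ge t n with ht | ht
    · exact h ⟨t, ht⟩
    · rw [hfull X ht, hfull Y ht, hcard]
  · have := h a
    rwa [(countP_take_memberships X Y a).1, (countP_take_memberships X Y a).2] at this

end Memberships

def excess (v : List DyckStep) : ℤ := v.count U - v.count D

@[simp] theorem excess_nil : excess [] = 0 := rfl

@[simp] theorem excess_cons_U (v : List DyckStep) : excess (U :: v) = excess v + 1 := by
  simp [excess]; ring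

@[simp] theorem excess_cons_D (v : List DyckStep) : excess (D :: v) = excess v - 1 := by
  simp [excess]; ring

@[simp] theorem excess_append (v w : List DyckStep) : excess (v ++ w) = excess v + excess w := by
  simp only [excess, count_append]; push_cast; ring

theorem excess_nonneg_iff (v : List DyckStep) : 0 ≤ excess v ↔ v.count D ≤ v.count U := by
  simp [excess]

theorem excess_eq_zero_iff (v : List DyckStep) : excess v = 0 ↔ v.count U = v.count D := by
  simp [excess, sub_eq_zero]

theorem sub_one_le_excess_take_succ (v : List DyckStep) (i : ℕ) :
    excess (v.take i) - 1 ≤ excess (v.take (i + 1)) := by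
  rw [take_add_one, excess_append]
  rcases v[i]? with _ | _ | _ <;> simp [add_assoc]

/-- `(true, false) ↦ UU`, `(false, true) ↦ DD`, `(false, false) ↦ UD`, `(true, true) ↦ DU`:
after `2 t` steps the excess is twice the lead of the first coordinate after `t` entries, and
in between it is at most one lower. -/
def dyckSteps (l : List (Bool × Bool)) : List DyckStep :=
  l.flatMap fun p => [if p.2 then D else U, if p.1 then U else D]

def ofDyckSteps : List DyckStep → List (Bool × Bool)
  | a :: b :: v => (b = U, a = D) :: ofDyckSteps v
  | _ => []

@[simp]
theorem dyckSteps_nil : dyckSteps [] = [] := rfl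

@[simp]
theorem dyckSteps_cons (p : Bool × Bool) (l : List (Bool × Bool)) :
    dyckSteps (p :: l) = (if p.2 then D else U) :: (if p.1 then U else D) :: dyckSteps l := rfl

theorem length_dyckSteps (l : List (Bool × Bool)) : (dyckSteps l).length = 2 * l.length := by
  induction l with
  | nil => rfl
  | cons p l ih => simp [ih]; ring

theorem take_two_mul_dyckSteps (l : List (Bool × Bool)) (t : ℕ) :
    (dyckSteps l).take (2 * t) = dyckSteps (l.take t) := by
  induction l generalizing t with
  | nil => simp
  | cons p l ih => cases t <;> simp [Nat.mul_succ, ih]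

theorem excess_dyckSteps (l : List (Bool × Bool)) :
    excess (dyckSteps l) = 2 * ((l.countP (·.1) : ℤ) - l.countP (·.2)) := by
  induction l with
  | nil => rfl
  | cons p l ih => rcases p with ⟨_ | _, _ | _⟩ <;> simp [ih] <;> ring

theorem ofDyckSteps_dyckSteps (l : List (Bool × Bool)) : ofDyckSteps (dyckSteps l) = l := by
  induction l with
  | nil => rfl
  | cons p l ih => rcases p with ⟨_ | _, _ | _⟩ <;> simp [ofDyckSteps, ih]

theorem dyckSteps_ofDyckSteps :
    ∀ {v : List DyckStep}, Even v.length → dyckSteps (ofDyckSteps v) = v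
  | [], _ => rfl
  | [_], h => by simp at h
  | a :: b :: v, h => by
    rw [ofDyckSteps, dyckSteps_cons, dyckSteps_ofDyckSteps (by simpa [parity_simps] using h)]
    cases a <;> cases b <;> rfl

theorem isBallot_iff_excess_dyckSteps (l : List (Bool × Bool)) :
    IsBallot l ↔ excess (dyckSteps l) = 0 ∧ ∀ i, -1 ≤ excess ((dyckSteps l).take i) := by
  have htake (t : ℕ) := congrArg excess (take_two_mul_dyckSteps l t)
  simp only [excess_dyckSteps] at htake
  rw [IsBallot, excess_dyckSteps]
  refine and_congr (by omega) ⟨fun h i => ?_, fun h t => ?_⟩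
  · obtain ⟨t, rfl | rfl⟩ := Nat.even_or_odd' i
    · have := h t
      have := htake t
      omega
    · have := h t
      have := htake t
      have := sub_one_le_excess_take_succ (dyckSteps l) (2 * t)
      omega
  · have := h (2 * t)
    have := htake t
    omega

theorem excess_take_cons_append_nonneg_iff {v : List DyckStep} (h₀ : excess v = 0) :
    (∀ i, 0 ≤ excess ((U :: v ++ [D]).take i)) ↔ ∀ i, -1 ≤ excess (v.take i) := by
  have hsucc (i : ℕ) : excess ((U :: v ++ [D]).take (i + 1)) = excess ((v ++ [D]).take i) + 1 := by
    simp
  refine ⟨fun h i => ?_, fun h i => ?_⟩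
  · rcases le_or_gt i v.length with hi | hi
    · have := h (i + 1)
      rw [hsucc, take_append_of_le_length hi] at this
      omega
    · rw [take_of_length_le hi.le, h₀]
      norm_num
  · cases i with
    | zero => simp
    | succ i =>
      rw [hsucc]
      rcases le_or_gt i v.length with hi | hi
      · have := h i
        rw [take_append_of_le_length hi]
        omega
      · rw [take_of_length_le (by simpa using hi)]
        simp [h₀]

namespace DyckWord

/-- Like `DyckWord.nest`, but the prefixes of `v` may go down to excess `-1`. -/
def wrap (v : List DyckStep) (h₀ : excess v = 0) (h : ∀ i, -1 ≤ excess (v.take i)) :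
    DyckWord where
  toList := U :: v ++ [D]
  count_U_eq_count_D := (excess_eq_zero_iff _).1 (by simp [h₀])
  count_D_le_count_U i := (excess_nonneg_iff _).1 ((excess_take_cons_append_nonneg_iff h₀).2 h i)

variable {w : DyckWord} (hw : w ≠ 0)
include hw

theorem excess_dropLast_tail : excess w.toList.dropLast.tail = 0 := by
  have := (excess_eq_zero_iff _).2 w.count_U_eq_count_D
  rw [← cons_tail_dropLast_concat hw] at this
  simpa using this

theorem neg_one_le_excess_take_dropLast_tail (i : ℕ) :
    -1 ≤ excess (w.toList.dropLast.tail.take i) := by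
  refine (excess_take_cons_append_nonneg_iff (excess_dropLast_tail hw)).1 (fun j => ?_) i
  rw [cons_tail_dropLast_concat hw]
  exact (excess_nonneg_iff _).2 (w.count_D_le_count_U j)

end DyckWord

def ballotDyckWord (l : List (Bool × Bool)) (hl : IsBallot l) : DyckWord :=
  DyckWord.wrap (dyckSteps l) ((isBallot_iff_excess_dyckSteps l).1 hl).1
    ((isBallot_iff_excess_dyckSteps l).1 hl).2

theorem semilength_ballotDyckWord (l : List (Bool × Bool)) (hl : IsBallot l) :
    (ballotDyckWord l hl).semilength = l.length + 1 := by
  rw [← Nat.mul_left_cancel_iff two_pos, DyckWord.two_mul_semilength_eq_length]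
  simp [ballotDyckWord, DyckWord.wrap, length_dyckSteps]
  ring

theorem ballotDyckWord_inj {l l' : List (Bool × Bool)} {hl : IsBallot l} {hl' : IsBallot l'}
    (h : ballotDyckWord l hl = ballotDyckWord l' hl') : l = l' := by
  have h' := congrArg DyckWord.toList h
  simp only [ballotDyckWord, DyckWord.wrap, cons_append, cons.injEq, append_cancel_right_eq,
    true_and] at h'
  simpa only [ofDyckSteps_dyckSteps] using congrArg ofDyckSteps h'

theorem exists_ballotDyckWord_eq {w : DyckWord} (hw : w ≠ 0) :
    ∃ l hl, ballotDyckWord l hl = w := by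
  have hwv := DyckWord.cons_tail_dropLast_concat hw
  set v := w.toList.dropLast.tail
  have heven : Even v.length := by
    have hlen := congrArg length hwv
    rw [← w.two_mul_semilength_eq_length] at hlen
    simp only [cons_append, length_cons, length_append, length_nil] at hlen
    exact ⟨w.semilength - 1, by omega⟩
  have hsteps := dyckSteps_ofDyckSteps heven
  have hl : IsBallot (ofDyckSteps v) := by
    rw [isBallot_iff_excess_dyckSteps, hsteps]
    exact ⟨DyckWord.excess_dropLast_tail hw, DyckWord.neg_one_le_excess_take_dropLast_tail hw⟩
  refine ⟨ofDyckSteps v, hl, ?_⟩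
  exact DyckWord.ext (by simp only [ballotDyckWord, DyckWord.wrap, hsteps, hwv])

noncomputable def plePairsEquivBallot (n : ℕ) :
    {p : Finset (Fin n) × Finset (Fin n) // Ple p.1 p.2} ≃
      {l : List (Bool × Bool) // l.length = n ∧ IsBallot l} :=
  Equiv.ofBijective
    (fun p => ⟨memberships p.1.1 p.1.2, length_memberships _ _,
      (ple_iff_isBallot_memberships _ _).1 p.2⟩)
    ⟨fun p q h => Subtype.ext (Prod.ext_iff.2 (memberships_inj.1 (congrArg Subtype.val h))),
      fun ⟨l, hl, hballot⟩ => by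
        obtain ⟨X, Y, rfl⟩ := exists_memberships_eq hl
        exact ⟨⟨(X, Y), (ple_iff_isBallot_memberships X Y).2 hballot⟩, rfl⟩⟩

noncomputable def ballotEquivDyckWord (n : ℕ) :
    {l : List (Bool × Bool) // l.length = n ∧ IsBallot l} ≃
      {w : DyckWord // w.semilength = n + 1} :=
  Equiv.ofBijective
    (fun l => ⟨ballotDyckWord l.1 l.2.2, by rw [semilength_ballotDyckWord, l.2.1]⟩)
    ⟨fun l l' h => Subtype.ext <|
        ballotDyckWord_inj (hl := l.2.2) (hl' := l'.2.2) (congrArg Subtype.val h),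
      fun ⟨w, hw⟩ => by
        obtain ⟨l, hl, rfl⟩ := exists_ballotDyckWord_eq (w := w) (by rintro rfl; simp at hw)
        rw [semilength_ballotDyckWord, Nat.add_right_cancel_iff] at hw
        exact ⟨⟨l, hw, hl⟩, rfl⟩⟩

/-- The number of ordered pairs `(X, Y)` of subsets of `[n]` with `X ≤ Y` in `Pₙ`
equals the `(n+1)`-st Catalan number. -/
theorem card_pairs_eq_catalan (n : ℕ) :
    Nat.card {p : Finset (Fin n) × Finset (Fin n) // Ple p.1 p.2} = catalan (n+1) := by
  rw [Nat.card_congr ((plePairsEquivBallot n).trans (ballotEquivDyckWord n)),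
    Nat.card_eq_fintype_card, DyckWord.card_dyckWord_semilength_eq_catalan]
end
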